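/- arXiv:1311.2009 — 7 statements merged into one kernel-verified Lean document; each statement's English description precedes it below -/
import Mathlib

section
/- Let the LQ system be controllable. Suppose there exists a Lagrangian subspace Γ ⊆ ℝ^{2n} that is invariant under Ω·ℍ, i.e. (Ω·ℍ)·u ∈ Γ for every u ∈ Γ. Then there is no conjugate time t ≠ 0. -/
open Matrix

/-- The standard symplectic matrix `Ω = [[0, I],[−I, 0]]` on `ℝ^{2n}`. -/
noncomputable def Omega (n : ℕ) : Matrix (Fin n ⊕ Fin n) (Fin n ⊕ Fin n) ℝ :=
  Matrix.fromBlocks 0 1 (-1) 0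

/-- The Hamiltonian matrix `ℍ = [[B Bᵀ, A],[Aᵀ, Q]]` of the LQ problem. -/
noncomputable def HMat {n k : ℕ} (A Q : Matrix (Fin n) (Fin n) ℝ)
    (B : Matrix (Fin n) (Fin k) ℝ) : Matrix (Fin n ⊕ Fin n) (Fin n ⊕ Fin n) ℝ :=
  Matrix.fromBlocks (B * Bᵀ) A Aᵀ Q

/-- The Kalman matrix `[B, AB, …, A^{n−1}B]`. -/
noncomputable def Kalman {n k : ℕ} (A : Matrix (Fin n) (Fin n) ℝ)
    (B : Matrix (Fin n) (Fin k) ℝ) : Matrix (Fin n) (Fin n × Fin k) ℝ :=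
  Matrix.of fun i jl => (A ^ (jl.1 : ℕ) * B) i jl.2

/-- Controllability of the LQ system: the Kalman matrix has full rank. -/
def Controllable {n k : ℕ} (A : Matrix (Fin n) (Fin n) ℝ)
    (B : Matrix (Fin n) (Fin k) ℝ) : Prop :=
  (Kalman A B).rank = n

/-- `t` is a conjugate time: some nonzero vertical vector `(p,0)` is mapped by the
Hamiltonian flow `exp(t Ω ℍ)` back into the vertical subspace `𝒱 = {(p,0)}`. -/
def IsConjugateTime {n k : ℕ} (A Q : Matrix (Fin n) (Fin n) ℝ)
    (B : Matrix (Fin n) (Fin k) ℝ) (t : ℝ) : Prop :=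
  ∃ p : Fin n → ℝ, p ≠ 0 ∧
    ∀ i : Fin n,
      (NormedSpace.exp (t • (Omega n * HMat A Q B))).mulVec (Sum.elim p 0) (Sum.inr i) = 0

/-!
An isotropic `Ωℍ`-invariant subspace `Γ` meets the vertical subspace `𝒱` only in `0`: for
`(p, 0) ∈ Γ` isotropy gives `|Bᵀ p|² = 0`, so `Ωℍ (p, 0) = (Aᵀ p, 0) ∈ Γ`, and iterating,
controllability forces `p = 0`. Hence the Lagrangian `Γ` is the graph `{(S x, x)}` of a
symmetric `S`. Along a trajectory `(p, x)` of `exp (s Ωℍ)` put `y = p - S x`; invariance of `Γ`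
gives `y' = (Aᵀ + S B Bᵀ) y`, and then `⟨y, x⟩' = -|Bᵀ y|²`. If `(p₀, 0)` returns to `𝒱` at
time `t ≠ 0`, then `⟨y, x⟩` vanishes at `0` and at `t`, so it is constant in between and
`Bᵀ y ≡ 0` there. Then `y' = Aᵀ y`, so `Bᵀ (Aᵀ)ʲ y = 0` for all `j` and controllability gives
`y = 0`: the trajectory passes through `Γ`, hence `(p₀, 0) ∈ Γ` and `p₀ = 0`.
-/

section Calculus

variable {ι κ : Type*} [Fintype ι] [Fintype κ]

theorem HasDerivAt.linearMap_comp {E F : Type*} [NormedAddCommGroup E] [NormedSpace ℝ E]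
    [FiniteDimensional ℝ E] [NormedAddCommGroup F] [NormedSpace ℝ F] {f : ℝ → E} {f' : E}
    {s : ℝ} (L : E →ₗ[ℝ] F) (hf : HasDerivAt f f' s) :
    HasDerivAt (fun s => L (f s)) (L f') s :=
  (LinearMap.toContinuousLinearMap L).hasFDerivAt.comp_hasDerivAt s hf

theorem HasDerivAt.mulVec {f : ℝ → ι → ℝ} {f' : ι → ℝ} {s : ℝ}
    (K : Matrix κ ι ℝ) (hf : HasDerivAt f f' s) :
    HasDerivAt (fun s => K *ᵥ f s) (K *ᵥ f') s :=
  hf.linearMap_comp K.mulVecLin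

theorem HasDerivAt.dotProduct {f g : ℝ → ι → ℝ} {f' g' : ι → ℝ} {s : ℝ}
    (hf : HasDerivAt f f' s) (hg : HasDerivAt g g' s) :
    HasDerivAt (fun s => f s ⬝ᵥ g s) (f' ⬝ᵥ g s + f s ⬝ᵥ g') s := by
  unfold _root_.dotProduct
  rw [← Finset.sum_add_distrib]
  exact HasDerivAt.fun_sum fun i _ => (hasDerivAt_pi.1 hf i).mul (hasDerivAt_pi.1 hg i)

theorem hasDerivAt_exp_smul_mulVec [DecidableEq ι] (M : Matrix ι ι ℝ) (u : ι → ℝ) (s : ℝ) :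
    HasDerivAt (fun s : ℝ => NormedSpace.exp (s • M) *ᵥ u)
      (M *ᵥ (NormedSpace.exp (s • M) *ᵥ u)) s := by
  let : NormedRing (Matrix ι ι ℝ) := Matrix.linftyOpNormedRing
  let : NormedAlgebra ℝ (Matrix ι ι ℝ) := Matrix.linftyOpNormedAlgebra
  rw [mulVec_mulVec]
  exact (hasDerivAt_exp_smul_const' M s).linearMap_comp
    (LinearMap.applyₗ u ∘ₗ Matrix.toLin'.toLinearMap)

theorem mul_pow_mulVec_eq_zero_of_hasDerivAt [DecidableEq ι] {U : Set ℝ} (hU : IsOpen U)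
    {y : ℝ → ι → ℝ} {C : Matrix ι ι ℝ} (hy : ∀ s ∈ U, HasDerivAt y (C *ᵥ y s) s)
    {K : Matrix κ ι ℝ} (hK : ∀ s ∈ U, K *ᵥ y s = 0) (j : ℕ) :
    ∀ s ∈ U, (K * C ^ j) *ᵥ y s = 0 := by
  induction j with
  | zero => simpa using hK
  | succ j ih =>
    intro s hs
    have hderiv := (hy s hs).mulVec (K * C ^ j)
    have hzero : HasDerivAt (fun s => (K * C ^ j) *ᵥ y s) 0 s :=
      (hasDerivAt_const s 0).congr_of_eventuallyEq <|
        Filter.eventually_of_mem (hU.mem_nhds hs) ih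
    rw [pow_succ, ← Matrix.mul_assoc, ← mulVec_mulVec]
    exact hderiv.unique hzero

theorem eq_zero_of_hasDerivAt_of_nonpos_of_eq {φ φ' : ℝ → ℝ}
    (hφ : ∀ s, HasDerivAt φ (φ' s) s) (hφ' : ∀ s, φ' s ≤ 0) {a b : ℝ} (hab : φ a = φ b) :
    ∀ s ∈ Set.uIoo a b, φ' s = 0 := by
  have hanti : Antitone φ := antitone_of_deriv_nonpos (fun s => (hφ s).differentiableAt)
    fun s => (hφ s).deriv ▸ hφ' s
  have hmin : φ (a ⊓ b) = φ a := by rcases min_choice a b with h | h <;> simp [h, hab]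
  have hmax : φ (a ⊔ b) = φ a := by rcases max_choice a b with h | h <;> simp [h, hab]
  have hconst : ∀ s ∈ Set.uIcc a b, φ s = φ a := fun s hs =>
    le_antisymm (hmin ▸ hanti hs.1) (hmax ▸ hanti hs.2)
  intro s hs
  have hzero : HasDerivAt φ 0 s :=
    (hasDerivAt_const s (φ a)).congr_of_eventuallyEq <| Filter.eventually_of_mem
      (isOpen_Ioo.mem_nhds hs) fun r hr => hconst r (Set.Ioo_subset_Icc_self hr)
  exact (hφ s).unique hzero

end Calculus

section Subspaces

variable {ι κ : Type*}

def Submodule.mulVecStabilizer {R : Type*} [CommRing R] [Fintype ι] [DecidableEq ι]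
    (Γ : Submodule R (ι → R)) : Subalgebra R (Matrix ι ι R) where
  carrier := {N | ∀ u ∈ Γ, N *ᵥ u ∈ Γ}
  mul_mem' hM hN u hu := by rw [← mulVec_mulVec]; exact hM _ (hN u hu)
  add_mem' hM hN u hu := by rw [add_mulVec]; exact Γ.add_mem (hM u hu) (hN u hu)
  algebraMap_mem' c u hu := by
    rw [Algebra.algebraMap_eq_smul_one, smul_mulVec, one_mulVec]; exact Γ.smul_mem c hu

theorem Submodule.exp_mulVec_mem [Fintype ι] [DecidableEq ι] {Γ : Submodule ℝ (ι → ℝ)}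
    {M : Matrix ι ι ℝ} (hM : ∀ u ∈ Γ, M *ᵥ u ∈ Γ) {u : ι → ℝ} (hu : u ∈ Γ) : NormedSpace.exp M *ᵥ u ∈ Γ :=
  NormedSpace.exp_mem (R := ℝ) (s := Γ.mulVecStabilizer)
    (Submodule.closed_of_finiteDimensional (Subalgebra.toSubmodule Γ.mulVecStabilizer)) hM u hu

theorem Submodule.exists_sumElim_mem_iff {K : Type*} [Field K] [Fintype ι] [Fintype κ]
    [DecidableEq κ] (Γ : Submodule K (ι ⊕ κ → K)) (hdim : Module.finrank K Γ = Fintype.card κ)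
    (htrans : ∀ p : ι → K, Sum.elim p 0 ∈ Γ → p = 0) :
    ∃ S : Matrix ι κ K, ∀ p x, Sum.elim p x ∈ Γ ↔ p = S *ᵥ x := by
  let π₁ : (ι ⊕ κ → K) →ₗ[K] ι → K := LinearMap.funLeft K K Sum.inl
  let π₂ : (ι ⊕ κ → K) →ₗ[K] κ → K := LinearMap.funLeft K K Sum.inr
  have hinj : Function.Injective (π₂ ∘ₗ Γ.subtype) := by
    rw [← LinearMap.ker_eq_bot, Submodule.eq_bot_iff]
    rintro ⟨u, hu⟩ (hu₂ : u ∘ Sum.inr = 0)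
    rw [← Sum.elim_comp_inl_inr u, hu₂] at hu
    have hu₁ := htrans _ hu
    ext (i | i)
    exacts [congrFun hu₁ i, congrFun hu₂ i]
  let e := (π₂ ∘ₗ Γ.subtype).linearEquivOfInjective hinj (by simp [hdim])
  have hgraph : ∀ x, Sum.elim (π₁ (e.symm x)) x ∈ Γ := fun x => by
    have hx : (e.symm x : ι ⊕ κ → K) ∘ Sum.inr = x := e.apply_symm_apply x
    have hmem := (e.symm x).2
    rwa [← Sum.elim_comp_inl_inr (e.symm x : ι ⊕ κ → K), hx] at hmem
  refine ⟨LinearMap.toMatrix' (π₁ ∘ₗ Γ.subtype ∘ₗ e.symm.toLinearMap), fun p x => ?_⟩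
  rw [LinearMap.toMatrix'_mulVec]
  refine ⟨fun hp => ?_, fun hp => hp ▸ hgraph x⟩
  have hdiff := Γ.sub_mem hp (hgraph x)
  rw [← Sum.elim_sub_sub, sub_self] at hdiff
  exact sub_eq_zero.1 (htrans _ hdiff)

/-- The `K^ι`-component of `u` in the splitting `K^(ι ⊕ κ) = graph S ⊕ (K^ι × 0)`. -/
def verticalComponent {K : Type*} [CommRing K] [Fintype κ] (S : Matrix ι κ K) :
    (ι ⊕ κ → K) →ₗ[K] ι → K :=
  LinearMap.funLeft K K Sum.inl - S.mulVecLin ∘ₗ LinearMap.funLeft K K Sum.inr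

theorem verticalComponent_sumElim {K : Type*} [CommRing K] [Fintype κ] (S : Matrix ι κ K)
    (p : ι → K) (x : κ → K) : verticalComponent S (Sum.elim p x) = p - S *ᵥ x :=
  rfl

end Subspaces

section LQ

variable {n k : ℕ} {A Q : Matrix (Fin n) (Fin n) ℝ} {B : Matrix (Fin n) (Fin k) ℝ}
  {Γ : Submodule ℝ (Fin n ⊕ Fin n → ℝ)} {S : Matrix (Fin n) (Fin n) ℝ}

theorem Omega_mulVec_sumElim (p x : Fin n → ℝ) : Omega n *ᵥ Sum.elim p x = Sum.elim x (-p) := by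
  simp [Omega, fromBlocks_mulVec, neg_mulVec]

theorem sumElim_dotProduct_Omega_mulVec_sumElim (p x p' x' : Fin n → ℝ) :
    Sum.elim p x ⬝ᵥ Omega n *ᵥ Sum.elim p' x' = p ⬝ᵥ x' - x ⬝ᵥ p' := by
  simp [Omega_mulVec_sumElim, sub_eq_add_neg]

theorem Omega_mul_HMat_mulVec_sumElim (p x : Fin n → ℝ) :
    (Omega n * HMat A Q B) *ᵥ Sum.elim p x =
      Sum.elim (Aᵀ *ᵥ p + Q *ᵥ x) (-(B *ᵥ Bᵀ *ᵥ p) - A *ᵥ x) := by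
  rw [← mulVec_mulVec, HMat, fromBlocks_mulVec, Omega_mulVec_sumElim]
  simp [mulVec_mulVec, sub_eq_add_neg, add_comm]

theorem Controllable.eq_zero_of_forall_mulVec_eq_zero (hctrl : Controllable A B)
    {z : Fin n → ℝ} (hz : ∀ j : ℕ, (Bᵀ * Aᵀ ^ j) *ᵥ z = 0) : z = 0 := by
  have hK : (Kalman A B)ᵀ *ᵥ z = 0 := by
    ext ⟨j, l⟩
    simpa [← transpose_pow, ← transpose_mul, Kalman, mulVec, dotProduct] using
      congrFun (hz j) l
  have hker : LinearMap.ker (Kalman A B)ᵀ.mulVecLin = ⊥ := by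
    have := (Kalman A B)ᵀ.mulVecLin.finrank_range_add_finrank_ker
    rw [← Matrix.rank, rank_transpose, hctrl, Module.finrank_fin_fun] at this
    exact Submodule.finrank_eq_zero.1 (by omega)
  exact ker_mulVecLin_eq_bot_iff.1 hker z hK

theorem transpose_mulVec_eq_zero_of_sumElim_zero_mem
    (hiso : ∀ u ∈ Γ, ∀ v ∈ Γ, u ⬝ᵥ Omega n *ᵥ v = 0)
    (hinv : ∀ u ∈ Γ, (Omega n * HMat A Q B) *ᵥ u ∈ Γ) {p : Fin n → ℝ}
    (hp : Sum.elim p 0 ∈ Γ) : Bᵀ *ᵥ p = 0 := by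
  have h := hiso _ hp _ (hinv _ hp)
  simp only [Omega_mul_HMat_mulVec_sumElim, sumElim_dotProduct_Omega_mulVec_sumElim,
    mulVec_zero, sub_zero, zero_dotProduct, dotProduct_neg, neg_eq_zero] at h
  rw [dotProduct_mulVec, ← mulVec_transpose] at h
  exact dotProduct_self_eq_zero.1 h

theorem eq_zero_of_sumElim_zero_mem (hctrl : Controllable A B)
    (hiso : ∀ u ∈ Γ, ∀ v ∈ Γ, u ⬝ᵥ Omega n *ᵥ v = 0)
    (hinv : ∀ u ∈ Γ, (Omega n * HMat A Q B) *ᵥ u ∈ Γ) {p : Fin n → ℝ}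
    (hp : Sum.elim p 0 ∈ Γ) : p = 0 := by
  have hpow : ∀ j : ℕ, Sum.elim ((Aᵀ ^ j) *ᵥ p) 0 ∈ Γ := by
    intro j
    induction j with
    | zero => simpa using hp
    | succ j ih =>
      have h := hinv _ ih
      rwa [Omega_mul_HMat_mulVec_sumElim,
        transpose_mulVec_eq_zero_of_sumElim_zero_mem hiso hinv ih, mulVec_zero, mulVec_zero,
        mulVec_zero, neg_zero, sub_zero, add_zero, mulVec_mulVec, ← pow_succ'] at h
  refine hctrl.eq_zero_of_forall_mulVec_eq_zero fun j => ?_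
  rw [← mulVec_mulVec]
  exact transpose_mulVec_eq_zero_of_sumElim_zero_mem hiso hinv (hpow j)

theorem verticalComponent_eq_zero_iff (hΓ : ∀ p x, Sum.elim p x ∈ Γ ↔ p = S *ᵥ x)
    {u : Fin n ⊕ Fin n → ℝ} : verticalComponent S u = 0 ↔ u ∈ Γ := by
  rw [← Sum.elim_comp_inl_inr u, hΓ, verticalComponent_sumElim, sub_eq_zero]

theorem mulVec_dotProduct_eq_of_isotropic (hΓ : ∀ p x, Sum.elim p x ∈ Γ ↔ p = S *ᵥ x)
    (hiso : ∀ u ∈ Γ, ∀ v ∈ Γ, u ⬝ᵥ Omega n *ᵥ v = 0) (x y : Fin n → ℝ) :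
    S *ᵥ x ⬝ᵥ y = x ⬝ᵥ S *ᵥ y := by
  have h := hiso _ ((hΓ _ x).2 rfl) _ ((hΓ _ y).2 rfl)
  rwa [sumElim_dotProduct_Omega_mulVec_sumElim, sub_eq_zero] at h

theorem verticalComponent_mulVec (hΓ : ∀ p x, Sum.elim p x ∈ Γ ↔ p = S *ᵥ x)
    (hinv : ∀ u ∈ Γ, (Omega n * HMat A Q B) *ᵥ u ∈ Γ) (u : Fin n ⊕ Fin n → ℝ) :
    verticalComponent S ((Omega n * HMat A Q B) *ᵥ u) =
      (Aᵀ + S * B * Bᵀ) *ᵥ verticalComponent S u := by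
  obtain ⟨y, x, rfl⟩ : ∃ y x, u = Sum.elim (y + S *ᵥ x) x :=
    ⟨u ∘ Sum.inl - S *ᵥ (u ∘ Sum.inr), u ∘ Sum.inr, by simp⟩
  have hsplit : Sum.elim (y + S *ᵥ x) x = Sum.elim y 0 + Sum.elim (S *ᵥ x) x := by
    rw [← Sum.elim_add_add, zero_add]
  have hgraph := (verticalComponent_eq_zero_iff hΓ).2 (hinv _ ((hΓ _ x).2 rfl))
  rw [verticalComponent_sumElim, add_sub_cancel_right, hsplit, mulVec_add, map_add, hgraph,
    add_zero, Omega_mul_HMat_mulVec_sumElim, verticalComponent_sumElim]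
  simp [add_mulVec, mulVec_neg, mulVec_mulVec, Matrix.mul_assoc, sub_eq_add_neg]

theorem hasDerivAt_verticalComponent_dotProduct (hΓ : ∀ p x, Sum.elim p x ∈ Γ ↔ p = S *ᵥ x)
    (hinv : ∀ u ∈ Γ, (Omega n * HMat A Q B) *ᵥ u ∈ Γ) (hS : ∀ x y, S *ᵥ x ⬝ᵥ y = x ⬝ᵥ S *ᵥ y)
    {v : ℝ → Fin n ⊕ Fin n → ℝ} {s : ℝ} (hv : HasDerivAt v ((Omega n * HMat A Q B) *ᵥ v s) s) :
    HasDerivAt (fun s => verticalComponent S (v s) ⬝ᵥ v s ∘ Sum.inr)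
      (-(Bᵀ *ᵥ verticalComponent S (v s) ⬝ᵥ Bᵀ *ᵥ verticalComponent S (v s))) s := by
  have hY := hv.linearMap_comp (verticalComponent S)
  rw [verticalComponent_mulVec hΓ hinv] at hY
  refine (hY.dotProduct (hv.linearMap_comp (LinearMap.funLeft ℝ ℝ Sum.inr))).congr_deriv ?_
  obtain ⟨y, x, hyx⟩ : ∃ y x, v s = Sum.elim (y + S *ᵥ x) x :=
    ⟨v s ∘ Sum.inl - S *ᵥ (v s ∘ Sum.inr), v s ∘ Sum.inr, by simp⟩
  have hB : ∀ z w, z ⬝ᵥ B *ᵥ w = Bᵀ *ᵥ z ⬝ᵥ w := fun z w => by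
    rw [dotProduct_mulVec, ← mulVec_transpose]
  have hA : Aᵀ *ᵥ y ⬝ᵥ x = y ⬝ᵥ A *ᵥ x := by rw [mulVec_transpose, dotProduct_mulVec]
  have hSB : (S * B * Bᵀ) *ᵥ y ⬝ᵥ x = Bᵀ *ᵥ y ⬝ᵥ Bᵀ *ᵥ S *ᵥ x := by
    rw [← mulVec_mulVec, ← mulVec_mulVec, hS, dotProduct_comm, hB, dotProduct_comm]
  simp only [LinearMap.funLeft, LinearMap.coe_mk, AddHom.coe_mk, hyx, Omega_mul_HMat_mulVec_sumElim,
    verticalComponent_sumElim, add_sub_cancel_right, Sum.elim_comp_inr, add_mulVec,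
    add_dotProduct, dotProduct_sub, dotProduct_neg, mulVec_add, dotProduct_add, hB]
  linarith

theorem mem_of_hasDerivAt_of_comp_inr_eq_zero (hctrl : Controllable A B)
    (hΓ : ∀ p x, Sum.elim p x ∈ Γ ↔ p = S *ᵥ x)
    (hinv : ∀ u ∈ Γ, (Omega n * HMat A Q B) *ᵥ u ∈ Γ) (hS : ∀ x y, S *ᵥ x ⬝ᵥ y = x ⬝ᵥ S *ᵥ y)
    {v : ℝ → Fin n ⊕ Fin n → ℝ} (hv : ∀ s, HasDerivAt v ((Omega n * HMat A Q B) *ᵥ v s) s)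
    {a b : ℝ} (ha : v a ∘ Sum.inr = 0) (hb : v b ∘ Sum.inr = 0) :
    ∀ s ∈ Set.uIoo a b, v s ∈ Γ := by
  set y := fun s => verticalComponent S (v s)
  have hBy : ∀ s ∈ Set.uIoo a b, Bᵀ *ᵥ y s = 0 := fun s hs =>
    dotProduct_self_eq_zero.1 <| neg_eq_zero.1 <| eq_zero_of_hasDerivAt_of_nonpos_of_eq
      (fun s => hasDerivAt_verticalComponent_dotProduct hΓ hinv hS (hv s))
      (fun s => neg_nonpos.2 (dotProduct_star_self_nonneg _)) (by simp [ha, hb]) s hs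
  have hy : ∀ s ∈ Set.uIoo a b, HasDerivAt y (Aᵀ *ᵥ y s) s := fun s hs => by
    have h := (hv s).linearMap_comp (verticalComponent S)
    rwa [verticalComponent_mulVec hΓ hinv, add_mulVec, ← mulVec_mulVec, hBy s hs, mulVec_zero,
      add_zero] at h
  intro s hs
  rw [← verticalComponent_eq_zero_iff hΓ]
  exact hctrl.eq_zero_of_forall_mulVec_eq_zero fun j =>
    mul_pow_mulVec_eq_zero_of_hasDerivAt isOpen_Ioo hy hBy j s hs

end LQ

theorem no_conjugate_times_of_invariant_lagrangian_general {n k : ℕ}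
    (A Q : Matrix (Fin n) (Fin n) ℝ) (B : Matrix (Fin n) (Fin k) ℝ)
    (hctrl : Controllable A B)
    (Γ : Submodule ℝ (Fin n ⊕ Fin n → ℝ))
    (hdim : Module.finrank ℝ Γ = n)
    (hisotropic : ∀ u ∈ Γ, ∀ v ∈ Γ, u ⬝ᵥ (Omega n).mulVec v = 0)
    (hinv : ∀ u ∈ Γ, (Omega n * HMat A Q B).mulVec u ∈ Γ) :
    ∀ t : ℝ, t ≠ 0 → ¬ IsConjugateTime A Q B t := by
  rintro t ht ⟨p, hp, hvert⟩
  have htrans : ∀ q : Fin n → ℝ, Sum.elim q 0 ∈ Γ → q = 0 := fun _ =>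
    eq_zero_of_sumElim_zero_mem hctrl hisotropic hinv
  obtain ⟨S, hΓ⟩ := Γ.exists_sumElim_mem_iff (by simpa using hdim) htrans
  set M := Omega n * HMat A Q B
  let v (s : ℝ) := NormedSpace.exp (s • M) *ᵥ Sum.elim p 0
  have hmid : v (t / 2) ∈ Γ := by
    refine mem_of_hasDerivAt_of_comp_inr_eq_zero hctrl hΓ hinv
      (mulVec_dotProduct_eq_of_isotropic hΓ hisotropic) (hasDerivAt_exp_smul_mulVec M _)
      (a := 0) (b := t) (by simp) (funext hvert) (t / 2) ?_
    rcases ht.lt_or_gt with h | h <;> simp [Set.uIoo, h.le] <;> grind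
  have hback : NormedSpace.exp ((-(t / 2)) • M) *ᵥ v (t / 2) = Sum.elim p 0 := by
    have hcomm : Commute ((-(t / 2)) • M) ((t / 2) • M) :=
      ((Commute.refl M).smul_left _).smul_right _
    rw [mulVec_mulVec, ← Matrix.exp_add_of_commute _ _ hcomm, neg_smul, neg_add_cancel,
      NormedSpace.exp_zero, one_mulVec]
  refine hp (htrans p (hback ▸ Γ.exp_mulVec_mem (fun u hu => ?_) hmid))
  rw [smul_mulVec]
  exact Γ.smul_mem _ (hinv u hu)

theorem no_conjugate_times_of_invariant_lagrangian {n k : ℕ}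
    (hn : 1 ≤ n) (hk : 1 ≤ k)
    (A Q : Matrix (Fin n) (Fin n) ℝ) (hQ : Q.IsSymm) (B : Matrix (Fin n) (Fin k) ℝ)
    (hctrl : Controllable A B)
    (Γ : Submodule ℝ (Fin n ⊕ Fin n → ℝ))
    (hdim : Module.finrank ℝ Γ = n)
    (hisotropic : ∀ u ∈ Γ, ∀ v ∈ Γ, u ⬝ᵥ (Omega n).mulVec v = 0)
    (hinv : ∀ u ∈ Γ, (Omega n * HMat A Q B).mulVec u ∈ Γ) :
    ∀ t : ℝ, t ≠ 0 → ¬ IsConjugateTime A Q B t :=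
  no_conjugate_times_of_invariant_lagrangian_general A Q B hctrl Γ hdim hisotropic hinv
end

section
/- Let M be a complex 2n×2n Hamiltonian matrix, let λ, λ' ∈ ℂ with λ + λ' ≠ 0, and let ξ, ξ' ∈ ℂ^{2n} be generalized eigenvectors, i.e. ξ ∈ ker((M − λ·I)^j) and ξ' ∈ ker((M − λ'·I)^l) for some natural numbers j, l. Then ξᵀ·Ω·ξ' = 0. -/
/-!
Hamiltonicity of `M` says `Mᵀ Ω = -Ω M`, i.e. `M` is skew-adjoint for the form
`⟪x, y⟫ = xᵀ Ω y`. Hence, with `N = M - λ` and `N' = M - λ'`,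
`⟪N x, y⟫ + ⟪x, N' y⟫ = -(λ + λ') ⟪x, y⟫`. If `N^(j+1) x = 0` and `N'^(l+1) y = 0`, both terms on
the left vanish by induction on `j` and `l` (`N x` and `N' y` are killed by lower powers), so
`⟪x, y⟫ = 0` since `λ + λ' ≠ 0`.
-/

open Matrix

/-- The standard symplectic matrix `Ω = [[0, I],[−I, 0]]`, over `ℂ`. -/
noncomputable def OmegaC (n : ℕ) : Matrix (Fin n ⊕ Fin n) (Fin n ⊕ Fin n) ℂ :=
  Matrix.fromBlocks 0 1 (-1) 0

theorem OmegaC_transpose (n : ℕ) : (OmegaC n)ᵀ = -OmegaC n := by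
  simp [OmegaC, fromBlocks_transpose, fromBlocks_neg]

section SkewAdjoint

variable {ι R : Type*} [Fintype ι] [CommRing R] {B M : Matrix ι ι R}

theorem transpose_mul_eq_neg_mul_of_transpose_mul_eq (hB : Bᵀ = -B) (hM : (B * M)ᵀ = B * M) :
    Mᵀ * B = -(B * M) := by
  rw [← hM, transpose_mul, hB, mul_neg, neg_neg]

theorem mulVec_dotProduct_mulVec_eq_neg (hM : Mᵀ * B = -(B * M)) (x y : ι → R) :
    (M *ᵥ x) ⬝ᵥ (B *ᵥ y) = -(x ⬝ᵥ (B *ᵥ (M *ᵥ y))) := by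
  rw [dotProduct_mulVec, vecMul_mulVec, ← dotProduct_mulVec, hM, neg_mulVec, dotProduct_neg,
    mulVec_mulVec]

variable [DecidableEq ι]

theorem sub_smul_mulVec_dotProduct_add (hM : Mᵀ * B = -(B * M)) (a b : R) (x y : ι → R) :
    ((M - a • 1) *ᵥ x) ⬝ᵥ (B *ᵥ y) + x ⬝ᵥ (B *ᵥ ((M - b • 1) *ᵥ y)) =
      -((a + b) * (x ⬝ᵥ (B *ᵥ y))) := by
  simp only [sub_mulVec, smul_mulVec, one_mulVec, sub_dotProduct, mulVec_sub, mulVec_smul,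
    dotProduct_sub, smul_dotProduct, dotProduct_smul, smul_eq_mul,
    mulVec_dotProduct_mulVec_eq_neg hM]
  ring

theorem dotProduct_mulVec_eq_zero_of_pow_sub_smul_mulVec [NoZeroDivisors R]
    (hM : Mᵀ * B = -(B * M)) {a b : R} (hab : a + b ≠ 0) {j l : ℕ} {x y : ι → R}
    (hx : ((M - a • 1) ^ j) *ᵥ x = 0) (hy : ((M - b • 1) ^ l) *ᵥ y = 0) :
    x ⬝ᵥ (B *ᵥ y) = 0 := by
  induction j generalizing x l y with
  | zero => simp_all
  | succ j ihj =>
    induction l generalizing y with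
    | zero => simp_all
    | succ l ihl =>
      have hNx : (M - a • 1) ^ j *ᵥ ((M - a • 1) *ᵥ x) = 0 := by
        rwa [mulVec_mulVec, ← pow_succ]
      have hNy : (M - b • 1) ^ l *ᵥ ((M - b • 1) *ᵥ y) = 0 := by
        rwa [mulVec_mulVec, ← pow_succ]
      have key := sub_smul_mulVec_dotProduct_add hM a b x y
      rw [ihj hNx hy, ihl hNy, add_zero, zero_eq_neg] at key
      exact (mul_eq_zero.mp key).resolve_left hab

end SkewAdjoint

theorem generalized_eigenvectors_omega_orthogonal_general {n : ℕ}
    (M : Matrix (Fin n ⊕ Fin n) (Fin n ⊕ Fin n) ℂ)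
    (hham : (OmegaC n * M)ᵀ = OmegaC n * M)
    (lam lam' : ℂ) (hsum : lam + lam' ≠ 0)
    (ξ ξ' : Fin n ⊕ Fin n → ℂ) (j l : ℕ)
    (hξ : ((M - lam • (1 : Matrix (Fin n ⊕ Fin n) (Fin n ⊕ Fin n) ℂ)) ^ j).mulVec ξ = 0)
    (hξ' : ((M - lam' • (1 : Matrix (Fin n ⊕ Fin n) (Fin n ⊕ Fin n) ℂ)) ^ l).mulVec ξ' = 0) :
    ξ ⬝ᵥ (OmegaC n).mulVec ξ' = 0 :=
  dotProduct_mulVec_eq_zero_of_pow_sub_smul_mulVec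
    (transpose_mul_eq_neg_mul_of_transpose_mul_eq (OmegaC_transpose n) hham) hsum hξ hξ'

theorem generalized_eigenvectors_omega_orthogonal {n : ℕ} (hn : 1 ≤ n)
    (M : Matrix (Fin n ⊕ Fin n) (Fin n ⊕ Fin n) ℂ)
    (hham : (OmegaC n * M)ᵀ = OmegaC n * M)
    (lam lam' : ℂ) (hsum : lam + lam' ≠ 0)
    (ξ ξ' : Fin n ⊕ Fin n → ℂ) (j l : ℕ)
    (hξ : ((M - lam • (1 : Matrix (Fin n ⊕ Fin n) (Fin n ⊕ Fin n) ℂ)) ^ j).mulVec ξ = 0)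
    (hξ' : ((M - lam' • (1 : Matrix (Fin n ⊕ Fin n) (Fin n ⊕ Fin n) ℂ)) ^ l).mulVec ξ' = 0) :
    ξ ⬝ᵥ (OmegaC n).mulVec ξ' = 0 :=
  generalized_eigenvectors_omega_orthogonal_general M hham lam lam' hsum ξ ξ' j l hξ hξ'
end

section
/- (Givental') Let ω₁ ≥ ω₂ ≥ … ≥ ω_n be real numbers and let H(p,x) = ½·Σ_{j=1}^n ω_j·(p_j² + x_j²) be the quadratic form on ℝ^{2n} with matrix ℍ' = [[diag(ω),0],[0,diag(ω)]]. Then there exists a Lagrangian subspace Λ ⊆ ℝ^{2n} with zᵀ·ℍ'·z > 0 for every z ∈ Λ, z ≠ 0, if and only if ω_j + ω_{n−j+1} > 0 for every j = 1, …, n. -/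
open Matrix

/-- The normal-form Hamiltonian matrix `ℍ' = [[diag ω, 0],[0, diag ω]]`,
corresponding to `H(p,x) = ½ Σ ωⱼ (pⱼ² + xⱼ²)`. -/
noncomputable def HNorm {n : ℕ} (ω : Fin n → ℝ) :
    Matrix (Fin n ⊕ Fin n) (Fin n ⊕ Fin n) ℝ :=
  Matrix.fromBlocks (Matrix.diagonal ω) 0 0 (Matrix.diagonal ω)

/-- A subspace of `ℝ^{2n}` is Lagrangian if it has dimension `n` and `Ω` vanishes on it. -/
def IsLagrangian {n : ℕ} (Λ : Submodule ℝ (Fin n ⊕ Fin n → ℝ)) : Prop :=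
  Module.finrank ℝ Λ = n ∧ ∀ u ∈ Λ, ∀ v ∈ Λ, u ⬝ᵥ (Omega n).mulVec v = 0

/-!
If `Λ` is Lagrangian, the vectors `u + Ωv` and `v + Ωu` (`u, v ∈ Λ`) both have squared norm
`|u|² + |v|²`, and their `ℍ'`-energies add up to `2 (H u + H v)`. Since `Λ × Λ` has dimension
`2n`, one can choose `(u, v) ≠ 0` so that `u + Ωv` vanishes on the first `j - 1` coordinate pairs
and `v + Ωu` on the first `n - j` pairs. As `ω` is nonincreasing, their energies are at most
`ω_j` and `ω_{n-j+1}` times their squared norms, so `ω_j + ω_{n-j+1} ≤ 0` would contradict the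
positivity of `H` on `Λ`. Conversely, if all `ω_j + ω_{n-j+1}` are positive, the graph
`x = p ∘ rev` is a Lagrangian subspace on which `2H = Σ (ω_j + ω_{n-j+1}) p_j²`.
-/

section

variable {n : ℕ}

def weightedSqNorm (ω : Fin n → ℝ) (z : Fin n ⊕ Fin n → ℝ) : ℝ :=
  ∑ i, ω i * (z (Sum.inl i) ^ 2 + z (Sum.inr i) ^ 2)

@[simp]
lemma Omega_mulVec_inl (v : Fin n ⊕ Fin n → ℝ) (i : Fin n) :
    (Omega n *ᵥ v) (Sum.inl i) = v (Sum.inr i) := by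
  simp [Omega, fromBlocks_mulVec]

@[simp]
lemma Omega_mulVec_inr (v : Fin n ⊕ Fin n → ℝ) (i : Fin n) :
    (Omega n *ᵥ v) (Sum.inr i) = -v (Sum.inl i) := by
  simp [Omega, fromBlocks_mulVec, neg_mulVec]

lemma dotProduct_Omega_mulVec (u v : Fin n ⊕ Fin n → ℝ) :
    u ⬝ᵥ Omega n *ᵥ v =
      ∑ i, (u (Sum.inl i) * v (Sum.inr i) - u (Sum.inr i) * v (Sum.inl i)) := by
  simp only [dotProduct, Fintype.sum_sum_type, Omega_mulVec_inl, Omega_mulVec_inr, mul_neg,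
    Finset.sum_neg_distrib, ← sub_eq_add_neg, Finset.sum_sub_distrib]

lemma dotProduct_HNorm_mulVec (ω : Fin n → ℝ) (z : Fin n ⊕ Fin n → ℝ) :
    z ⬝ᵥ HNorm ω *ᵥ z = weightedSqNorm ω z := by
  simp only [HNorm, fromBlocks_mulVec, dotProduct, Fintype.sum_sum_type, weightedSqNorm,
    mulVec_diagonal, zero_mulVec, add_zero, zero_add, Sum.elim_inl, Sum.elim_inr,
    Function.comp_apply, ← Finset.sum_add_distrib]
  exact Finset.sum_congr rfl fun i _ => by ring

lemma weightedSqNorm_add_Omega_mulVec_add (ω : Fin n → ℝ) (u v : Fin n ⊕ Fin n → ℝ) :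
    weightedSqNorm ω (u + Omega n *ᵥ v) + weightedSqNorm ω (v + Omega n *ᵥ u) =
      2 * (weightedSqNorm ω u + weightedSqNorm ω v) := by
  simp only [weightedSqNorm, Pi.add_apply, Omega_mulVec_inl, Omega_mulVec_inr, Finset.mul_sum,
    ← Finset.sum_add_distrib]
  exact Finset.sum_congr rfl fun i _ => by ring

lemma weightedSqNorm_one_add_Omega_mulVec (u v : Fin n ⊕ Fin n → ℝ) :
    weightedSqNorm 1 (u + Omega n *ᵥ v) =
      weightedSqNorm 1 u + weightedSqNorm 1 v + 2 * (u ⬝ᵥ Omega n *ᵥ v) := by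
  simp only [weightedSqNorm, dotProduct_Omega_mulVec, Pi.add_apply, Pi.one_apply,
    Omega_mulVec_inl, Omega_mulVec_inr, Finset.mul_sum, ← Finset.sum_add_distrib]
  exact Finset.sum_congr rfl fun i _ => by ring

lemma weightedSqNorm_nonneg {ω : Fin n → ℝ} (hω : 0 ≤ ω) (z : Fin n ⊕ Fin n → ℝ) :
    0 ≤ weightedSqNorm ω z :=
  Finset.sum_nonneg fun i _ => mul_nonneg (hω i) (by positivity)

def lowerCoords (j : Fin n) : (Fin n ⊕ Fin n → ℝ) →ₗ[ℝ] (Fin j ⊕ Fin j → ℝ) :=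
  LinearMap.funLeft ℝ ℝ (Sum.map (Fin.castLE j.isLt.le) (Fin.castLE j.isLt.le))

lemma weightedSqNorm_le_of_lowerCoords_eq_zero {ω : Fin n → ℝ} (hω : Antitone ω) {j : Fin n}
    {z : Fin n ⊕ Fin n → ℝ} (hz : lowerCoords j z = 0) :
    weightedSqNorm ω z ≤ ω j * weightedSqNorm 1 z := by
  rw [weightedSqNorm, weightedSqNorm, Finset.mul_sum]
  refine Finset.sum_le_sum fun i _ => ?_
  rcases lt_or_ge i j with hij | hji
  · have hl : z (Sum.inl i) = 0 := congrFun hz (Sum.inl ⟨i, hij⟩)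
    have hr : z (Sum.inr i) = 0 := congrFun hz (Sum.inr ⟨i, hij⟩)
    simp [hl, hr]
  · simpa using mul_le_mul_of_nonneg_right (hω hji) (by positivity)

lemma exists_lowerCoords_add_Omega_mulVec_eq_zero (Λ : Submodule ℝ (Fin n ⊕ Fin n → ℝ))
    (hΛ : Module.finrank ℝ Λ = n) (j k : Fin n) (hjk : (j : ℕ) + k < n) :
    ∃ u ∈ Λ, ∃ v ∈ Λ, (u ≠ 0 ∨ v ≠ 0) ∧
      lowerCoords j (u + Omega n *ᵥ v) = 0 ∧ lowerCoords k (v + Omega n *ᵥ u) = 0 := by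
  let ψ : Λ × Λ →ₗ[ℝ] (Fin n ⊕ Fin n → ℝ) :=
    Λ.subtype.coprod (mulVecLin (Omega n) ∘ₗ Λ.subtype)
  let Φ := (lowerCoords j ∘ₗ ψ).prod
    (lowerCoords k ∘ₗ ψ ∘ₗ (LinearEquiv.prodComm ℝ Λ Λ).toLinearMap)
  have hdim : Module.finrank ℝ ((Fin j ⊕ Fin j → ℝ) × (Fin k ⊕ Fin k → ℝ)) <
      Module.finrank ℝ (Λ × Λ) := by
    simp only [Module.finrank_prod, Module.finrank_fintype_fun_eq_card, Fintype.card_sum,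
      Fintype.card_fin, hΛ]
    omega
  obtain ⟨⟨u, v⟩, hker, hne⟩ := Submodule.exists_mem_ne_zero_of_ne_bot
    (LinearMap.ker_ne_bot_of_finrank_lt (f := Φ) hdim)
  refine ⟨u, u.2, v, v.2, ?_, congrArg Prod.fst hker, congrArg Prod.snd hker⟩
  contrapose! hne
  exact Prod.ext (Subtype.ext hne.1) (Subtype.ext hne.2)

lemma pos_add_rev_of_isLagrangian {ω : Fin n → ℝ} (hω : Antitone ω)
    {Λ : Submodule ℝ (Fin n ⊕ Fin n → ℝ)} (hΛ : IsLagrangian Λ)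
    (hpos : ∀ z ∈ Λ, z ≠ 0 → 0 < weightedSqNorm ω z) (j : Fin n) :
    0 < ω j + ω j.rev := by
  obtain ⟨u, hu, v, hv, hne, hz, hw⟩ :=
    exists_lowerCoords_add_Omega_mulVec_eq_zero Λ hΛ.1 j j.rev (by rw [Fin.val_rev]; omega)
  have hnonneg : ∀ z ∈ Λ, 0 ≤ weightedSqNorm ω z := fun z hz =>
    (eq_or_ne z 0).elim (fun h => by simp [h, weightedSqNorm]) fun h => (hpos z hz h).le
  have hQ : 0 < weightedSqNorm ω u + weightedSqNorm ω v := by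
    rcases hne with hu0 | hv0
    · exact add_pos_of_pos_of_nonneg (hpos u hu hu0) (hnonneg v hv)
    · exact add_pos_of_nonneg_of_pos (hnonneg u hu) (hpos v hv hv0)
  have hNz : weightedSqNorm 1 (u + Omega n *ᵥ v) = weightedSqNorm 1 u + weightedSqNorm 1 v := by
    rw [weightedSqNorm_one_add_Omega_mulVec, hΛ.2 u hu v hv, mul_zero, add_zero]
  have hNw : weightedSqNorm 1 (v + Omega n *ᵥ u) = weightedSqNorm 1 u + weightedSqNorm 1 v := by
    rw [weightedSqNorm_one_add_Omega_mulVec, hΛ.2 v hv u hu, mul_zero, add_zero, add_comm]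
  by_contra! h
  have hN :=
    add_nonneg (weightedSqNorm_nonneg zero_le_one u) (weightedSqNorm_nonneg zero_le_one v)
  refine lt_irrefl (0 : ℝ) ?_
  calc
    0 < 2 * (weightedSqNorm ω u + weightedSqNorm ω v) := by positivity
    _ = weightedSqNorm ω (u + Omega n *ᵥ v) + weightedSqNorm ω (v + Omega n *ᵥ u) :=
      (weightedSqNorm_add_Omega_mulVec_add ω u v).symm
    _ ≤ ω j * weightedSqNorm 1 (u + Omega n *ᵥ v) +
        ω j.rev * weightedSqNorm 1 (v + Omega n *ᵥ u) :=
      add_le_add (weightedSqNorm_le_of_lowerCoords_eq_zero hω hz)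
        (weightedSqNorm_le_of_lowerCoords_eq_zero hω hw)
    _ = (ω j + ω j.rev) * (weightedSqNorm 1 u + weightedSqNorm 1 v) := by rw [hNz, hNw]; ring
    _ ≤ 0 := mul_nonpos_of_nonpos_of_nonneg h hN

def revGraph (n : ℕ) : (Fin n → ℝ) →ₗ[ℝ] (Fin n ⊕ Fin n → ℝ) :=
  LinearMap.funLeft ℝ ℝ (Sum.elim id Fin.rev)

lemma revGraph_injective : Function.Injective (revGraph n) :=
  LinearMap.funLeft_injective_of_surjective _ _ _ fun i => ⟨Sum.inl i, rfl⟩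

lemma Fin.sum_comp_rev {M : Type*} [AddCommMonoid M] (f : Fin n → M) :
    ∑ i : Fin n, f i.rev = ∑ i, f i :=
  Equiv.sum_comp Fin.revPerm f

lemma isLagrangian_range_revGraph : IsLagrangian (LinearMap.range (revGraph n)) := by
  refine ⟨by rw [LinearMap.finrank_range_of_inj revGraph_injective]; simp, ?_⟩
  rintro _ ⟨c, rfl⟩ _ ⟨d, rfl⟩
  rw [dotProduct_Omega_mulVec, Finset.sum_sub_distrib, sub_eq_zero, ← Fin.sum_comp_rev]
  simp [revGraph, LinearMap.funLeft_apply, mul_comm]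

lemma weightedSqNorm_revGraph (ω : Fin n → ℝ) (c : Fin n → ℝ) :
    weightedSqNorm ω (revGraph n c) = ∑ i, (ω i + ω i.rev) * c i ^ 2 := by
  simp only [weightedSqNorm, revGraph, LinearMap.funLeft_apply, Sum.elim_inl, Sum.elim_inr, id,
    mul_add, add_mul, Finset.sum_add_distrib]
  rw [← Fin.sum_comp_rev fun i => ω i * c i.rev ^ 2]
  simp

end

theorem givental_positive_lagrangian_iff_general {n : ℕ}
    (ω : Fin n → ℝ) (hω : ∀ i j : Fin n, i ≤ j → ω j ≤ ω i) :
    (∃ Λ : Submodule ℝ (Fin n ⊕ Fin n → ℝ), IsLagrangian Λ ∧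
        ∀ z ∈ Λ, z ≠ 0 → 0 < z ⬝ᵥ (HNorm ω).mulVec z) ↔
      ∀ j : Fin n, 0 < ω j + ω j.rev := by
  simp only [dotProduct_HNorm_mulVec]
  refine ⟨fun ⟨Λ, hΛ, hpos⟩ => pos_add_rev_of_isLagrangian hω hΛ hpos, fun h => ?_⟩
  refine ⟨LinearMap.range (revGraph n), isLagrangian_range_revGraph, ?_⟩
  rintro _ ⟨c, rfl⟩ hc
  obtain ⟨i, hi⟩ := Function.ne_iff.mp fun hc0 : c = 0 => hc (by rw [hc0, map_zero])
  rw [weightedSqNorm_revGraph]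
  exact Finset.sum_pos' (fun i _ => mul_nonneg (h i).le (sq_nonneg _))
    ⟨i, Finset.mem_univ _, mul_pos (h i) (sq_pos_of_ne_zero hi)⟩

theorem givental_positive_lagrangian_iff {n : ℕ} (hn : 1 ≤ n)
    (ω : Fin n → ℝ) (hω : ∀ i j : Fin n, i ≤ j → ω j ≤ ω i) :
    (∃ Λ : Submodule ℝ (Fin n ⊕ Fin n → ℝ), IsLagrangian Λ ∧
        ∀ z ∈ Λ, z ≠ 0 → 0 < z ⬝ᵥ (HNorm ω).mulVec z) ↔
      ∀ j : Fin n, 0 < ω j + ω j.rev :=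
  givental_positive_lagrangian_iff_general ω hω
end

section
/- Let S : ℝ → M_n(ℝ) be a smooth (infinitely differentiable) family of symmetric n×n real matrices, fix t₀ ∈ ℝ, and assume: (monotone) the derivative S'(t) is positive semidefinite for every t ∈ ℝ; (ample at t₀) there exists an integer N ≥ 1 such that for every z ∈ ℝⁿ, z ≠ 0, there is some i with 1 ≤ i ≤ N and S^{(i)}(t₀)·z ≠ 0, where S^{(i)} denotes the i-th derivative. Then there exists ε > 0 such that S(t) is invertible for every t with 0 < |t − t₀| < ε. -/
open Matrix

/-- The `i`-th derivative of a matrix-valued curve, computed entrywise. -/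
noncomputable def matDeriv {n : ℕ} (S : ℝ → Matrix (Fin n) (Fin n) ℝ) (i : ℕ) (t : ℝ) :
    Matrix (Fin n) (Fin n) ℝ :=
  Matrix.of fun a b => iteratedDeriv i (fun s => S s a b) t

namespace MACurve

open Set Filter Topology
open scoped ContDiff

lemma one_le_inf : (1 : WithTop ℕ∞) ≤ ∞ := by exact_mod_cast le_top

variable {n : ℕ}

lemma matDeriv_apply (S : ℝ → Matrix (Fin n) (Fin n) ℝ) (i : ℕ) (t : ℝ) (a b : Fin n) :
    matDeriv S i t a b = iteratedDeriv i (fun s => S s a b) t := rfl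

lemma hasDerivAt_entry (S : ℝ → Matrix (Fin n) (Fin n) ℝ)
    (hs : ∀ a b, ContDiff ℝ ∞ (fun t => S t a b)) (y : Fin n → ℝ) (a : Fin n) (t : ℝ) :
    HasDerivAt (fun t => (S t *ᵥ y) a) ((matDeriv S 1 t *ᵥ y) a) t := by
  simp only [Matrix.mulVec, dotProduct, matDeriv_apply, iteratedDeriv_one]
  exact HasDerivAt.fun_sum fun b _ =>
    (((hs a b).differentiable (by simp) t).hasDerivAt).mul_const (y b)

lemma hasDerivAt_q (S : ℝ → Matrix (Fin n) (Fin n) ℝ)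
    (hs : ∀ a b, ContDiff ℝ ∞ (fun t => S t a b)) (y : Fin n → ℝ) (t : ℝ) :
    HasDerivAt (fun t => y ⬝ᵥ (S t *ᵥ y)) (y ⬝ᵥ (matDeriv S 1 t *ᵥ y)) t := by
  simp only [dotProduct]
  exact HasDerivAt.fun_sum fun a _ => (hasDerivAt_entry S hs y a t).const_mul (y a)

lemma mono_q (S : ℝ → Matrix (Fin n) (Fin n) ℝ)
    (hs : ∀ a b, ContDiff ℝ ∞ (fun t => S t a b))
    (hmono : ∀ t : ℝ, (matDeriv S 1 t).PosSemidef) (y : Fin n → ℝ) :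
    Monotone (fun t => y ⬝ᵥ (S t *ᵥ y)) := by
  apply monotone_of_deriv_nonneg (fun t => (hasDerivAt_q S hs y t).differentiableAt)
  intro t
  rw [(hasDerivAt_q S hs y t).deriv]
  have h0 := (hmono t).dotProduct_mulVec_nonneg y
  have hy : star y = y := funext fun i => star_trivial _
  rwa [hy] at h0

lemma form_zero {M : Matrix (Fin n) (Fin n) ℝ} (hM : M.PosSemidef) {y : Fin n → ℝ}
    (h : y ⬝ᵥ (M *ᵥ y) = 0) : M *ᵥ y = 0 := by
  have hy : star y = y := funext fun i => star_trivial _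
  exact (hM.dotProduct_mulVec_zero_iff y).1 (by rwa [hy])

lemma iteratedDeriv_zero_of_zero_Ico {g : ℝ → ℝ} {a b : ℝ}
    (h0 : ∀ t ∈ Set.Ico a b, g t = 0) :
    ∀ m, ∀ t ∈ Set.Ico a b, iteratedDeriv m g t = 0 := by
  intro m
  induction m with
  | zero => simpa [iteratedDeriv_zero] using h0
  | succ m ih =>
    intro t ht
    rw [iteratedDeriv_succ]
    by_cases hd : DifferentiableAt ℝ (iteratedDeriv m g) t
    · rw [← hd.derivWithin (uniqueDiffOn_Ici t t Set.self_mem_Ici)]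
      have hev : iteratedDeriv m g =ᶠ[𝓝[Set.Ici t] t] fun _ => (0:ℝ) := by
        filter_upwards [Ico_mem_nhdsGE_of_mem (Set.left_mem_Ico.2 ht.2)] with x hx
        exact ih x ⟨le_trans ht.1 hx.1, hx.2⟩
      rw [hev.derivWithin_eq (ih t ht)]
      exact congrFun (derivWithin_const _ _) _
    · exact deriv_zero_of_not_differentiableAt hd

lemma iteratedDeriv_sum_mul (y : Fin n → ℝ) :
    ∀ (i : ℕ) (f : Fin n → ℝ → ℝ), (∀ b, ContDiff ℝ ∞ (f b)) → ∀ t : ℝ,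
      iteratedDeriv i (fun s => ∑ b, f b s * y b) t = ∑ b, iteratedDeriv i (f b) t * y b := by
  intro i
  induction i with
  | zero => intro f hf t; simp [iteratedDeriv_zero]
  | succ i ih =>
    intro f hf t
    have hd : deriv (fun s => ∑ b, f b s * y b) = fun s => ∑ b, deriv (f b) s * y b :=
      funext fun s => (HasDerivAt.fun_sum fun b _ =>
        (((hf b).differentiable (by simp) s).hasDerivAt).mul_const (y b)).deriv
    rw [iteratedDeriv_succ', hd,
      ih (fun b => deriv (f b)) (fun b => (contDiff_infty_iff_deriv.1 (hf b)).2) t]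
    exact Finset.sum_congr rfl fun b _ => by rw [← iteratedDeriv_succ']

lemma caseA (S : ℝ → Matrix (Fin n) (Fin n) ℝ)
    (hs : ∀ a b, ContDiff ℝ ∞ (fun t => S t a b))
    (hmono : ∀ t : ℝ, (matDeriv S 1 t).PosSemidef) (t₀ c : ℝ) (htc : t₀ < c)
    (hA : ∀ s, t₀ < s → s < c → ∃ y : Fin n → ℝ, y ≠ 0 ∧ y ⬝ᵥ (S c *ᵥ y) ≤ y ⬝ᵥ (S s *ᵥ y))
    (hample : ∃ N : ℕ, 1 ≤ N ∧ ∀ z : Fin n → ℝ, z ≠ 0 →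
      ∃ i : ℕ, 1 ≤ i ∧ i ≤ N ∧ (matDeriv S i t₀).mulVec z ≠ 0) : False := by
  have hc0 : (0:ℝ) < c - t₀ := by linarith
  set σ : ℕ → ℝ := fun k => t₀ + (c - t₀) / (k + 2) with hσ
  have hσ1 : ∀ k, t₀ < σ k := by
    intro k
    have : (0:ℝ) < (c - t₀) / (k+2) := div_pos hc0 (by positivity)
    simp only [hσ]; linarith
  have hσ2 : ∀ k, σ k < c := by
    intro k
    have h1 : (c - t₀) / ((k:ℝ)+2) < c - t₀ := by
      apply div_lt_self hc0
      have : (0:ℝ) ≤ (k:ℝ) := Nat.cast_nonneg k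
      linarith
    simp only [hσ]; linarith
  have hσanti : ∀ {k l : ℕ}, k ≤ l → σ l ≤ σ k := by
    intro k l hkl
    have hkl' : ((k:ℝ)+2) ≤ ((l:ℝ)+2) := by
      have : (k:ℝ) ≤ l := Nat.cast_le.2 hkl
      linarith
    have : (c - t₀) / ((l:ℝ)+2) ≤ (c - t₀) / ((k:ℝ)+2) :=
      div_le_div_of_nonneg_left hc0.le (by positivity) hkl'
    simp only [hσ]; linarith
  set K : ℕ → Submodule ℝ (Fin n → ℝ) :=
    fun k => ⨅ r ∈ Set.Icc (σ k) c, LinearMap.ker ((matDeriv S 1 r).mulVecLin) with hK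
  have hmemK : ∀ (k : ℕ) (y : Fin n → ℝ),
      y ∈ K k ↔ ∀ r ∈ Set.Icc (σ k) c, matDeriv S 1 r *ᵥ y = 0 := by
    intro k y
    simp [hK, Submodule.mem_iInf, LinearMap.mem_ker, Matrix.mulVecLin_apply]
  have hKne : ∀ k, ∃ y : Fin n → ℝ, y ≠ 0 ∧ y ∈ K k := by
    intro k
    obtain ⟨y, hy0, hyq⟩ := hA (σ k) (hσ1 k) (hσ2 k)
    have hm := mono_q S hs hmono y
    have hconst : Set.EqOn (fun t => y ⬝ᵥ (S t *ᵥ y)) (fun _ => y ⬝ᵥ (S c *ᵥ y))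
        (Set.Icc (σ k) c) := by
      intro r hr
      exact le_antisymm (hm hr.2) (le_trans hyq (hm hr.1))
    refine ⟨y, hy0, (hmemK k y).2 fun r hr => ?_⟩
    apply form_zero (hmono r)
    have hdiff := hasDerivAt_q S hs y r
    have hu : UniqueDiffWithinAt ℝ (Set.Icc (σ k) c) r := uniqueDiffOn_Icc (hσ2 k) r hr
    rw [← hdiff.deriv, ← hdiff.differentiableAt.derivWithin hu,
      derivWithin_congr hconst (hconst hr)]
    exact congrFun (derivWithin_const _ _) _
  have hKanti : ∀ {k l : ℕ}, k ≤ l → K l ≤ K k := by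
    intro k l hkl y hy
    rw [hmemK] at hy ⊢
    intro r hr
    exact hy r ⟨le_trans (hσanti hkl) hr.1, hr.2⟩
  have hDne : (Set.range fun k => Module.finrank ℝ (K k)).Nonempty := ⟨_, ⟨0, rfl⟩⟩
  obtain ⟨k₀, hk₀⟩ : ∃ k₀, Module.finrank ℝ (K k₀) =
      sInf (Set.range fun k => Module.finrank ℝ (K k)) := Nat.sInf_mem hDne
  have hstab : ∀ k, k₀ ≤ k → K k = K k₀ := by
    intro k hk
    apply Submodule.eq_of_le_of_finrank_le (hKanti hk)
    rw [hk₀]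
    exact Nat.sInf_le ⟨k, rfl⟩
  obtain ⟨y, hy0, hyK⟩ := hKne k₀
  have hkill : ∀ r ∈ Set.Ioc t₀ c, matDeriv S 1 r *ᵥ y = 0 := by
    intro r hr
    have hrt : 0 < r - t₀ := by linarith [hr.1]
    obtain ⟨m, hm⟩ := exists_nat_gt ((c - t₀)/(r - t₀))
    set k := max k₀ m with hkdef
    have hmk : (m:ℝ) ≤ (k:ℝ) := Nat.cast_le.2 (le_max_right _ _)
    have h2 : (c - t₀)/(r - t₀) < (k:ℝ) + 2 := by linarith
    have h3 : (c - t₀)/((k:ℝ)+2) < r - t₀ := by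
      rw [div_lt_iff₀ (by positivity)]
      have h4 := (div_lt_iff₀ hrt).1 h2
      nlinarith
    have h1 : σ k ≤ r := by simp only [hσ]; linarith
    have hyk : y ∈ K k := (hstab k (le_max_left _ _)).symm ▸ hyK
    exact (hmemK k y).1 hyk r ⟨h1, hr.2⟩
  obtain ⟨N, hN1, hN⟩ := hample
  obtain ⟨i, hi1, hiN, hiz⟩ := hN y hy0
  apply hiz
  obtain ⟨j, rfl⟩ : ∃ j, i = j + 1 := ⟨i - 1, by omega⟩
  funext a
  set G : ℝ → ℝ := fun r => ∑ b, deriv (fun t => S t a b) r * y b with hG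
  have hGcont : Continuous G := by
    apply continuous_finset_sum
    intro b _
    exact ((hs a b).continuous_deriv one_le_inf).mul continuous_const
  have hGIoc : ∀ r ∈ Set.Ioc t₀ c, G r = 0 := by
    intro r hr
    have h5 := congrFun (hkill r hr) a
    simpa [hG, Matrix.mulVec, dotProduct, matDeriv_apply, iteratedDeriv_one] using h5
  have hGIco : ∀ r ∈ Set.Ico t₀ c, G r = 0 := by
    have hcl : Set.EqOn G (fun _ => (0:ℝ)) (closure (Set.Ioc t₀ c)) :=
      Set.EqOn.closure (fun r hr => hGIoc r hr) hGcont continuous_const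
    rw [closure_Ioc (ne_of_lt htc)] at hcl
    intro r hr
    exact hcl ⟨hr.1, hr.2.le⟩
  have hsum := iteratedDeriv_sum_mul y (j+1) (fun b => fun t => S t a b) (fun b => hs a b) t₀
  have hderiv : deriv (fun s => ∑ b, S s a b * y b) = G :=
    funext fun s => (HasDerivAt.fun_sum fun b _ =>
      (((hs a b).differentiable (by simp) s).hasDerivAt).mul_const (y b)).deriv
  have hz : iteratedDeriv (j+1) (fun s => ∑ b, S s a b * y b) t₀ = 0 := by
    rw [iteratedDeriv_succ', hderiv]
    exact iteratedDeriv_zero_of_zero_Ico hGIco j t₀ ⟨le_refl _, htc⟩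
  show (matDeriv S (j+1) t₀ *ᵥ y) a = (0 : Fin n → ℝ) a
  simp only [Matrix.mulVec, dotProduct, matDeriv_apply, Pi.zero_apply]
  rw [← hsum] at *
  exact hz

lemma core (S : ℝ → Matrix (Fin n) (Fin n) ℝ)
    (hs : ∀ a b, ContDiff ℝ ∞ (fun t => S t a b))
    (hsymm : ∀ t : ℝ, (S t).IsSymm)
    (t₀ : ℝ)
    (hmono : ∀ t : ℝ, (matDeriv S 1 t).PosSemidef)
    (hample : ∃ N : ℕ, 1 ≤ N ∧ ∀ z : Fin n → ℝ, z ≠ 0 →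
      ∃ i : ℕ, 1 ≤ i ∧ i ≤ N ∧ (matDeriv S i t₀).mulVec z ≠ 0)
    (hacc : ∀ ε : ℝ, 0 < ε → ∃ t, t₀ < t ∧ t < t₀ + ε ∧ ¬ IsUnit (S t)) : False := by
  by_cases hA : ∃ c, t₀ < c ∧ ∀ s, t₀ < s → s < c →
      ∃ y : Fin n → ℝ, y ≠ 0 ∧ y ⬝ᵥ (S c *ᵥ y) ≤ y ⬝ᵥ (S s *ᵥ y)
  · obtain ⟨c, hc, h⟩ := hA
    exact caseA S hs hmono t₀ c hc h hample
  · push_neg at hA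
    have step : ∀ τ : ℝ, t₀ < τ → ∃ τ', (t₀ < τ' ∧ τ' < τ) ∧ (¬ IsUnit (S τ')) ∧
        ∀ v : Fin n → ℝ, v ≠ 0 → v ⬝ᵥ (S τ' *ᵥ v) < v ⬝ᵥ (S τ *ᵥ v) := by
      intro τ hτ
      obtain ⟨s, hs1, hs2, hstrict⟩ := hA ((t₀ + τ)/2) (by linarith)
      obtain ⟨τ', hτ'1, hτ'2, hτ'sing⟩ := hacc (s - t₀) (by linarith)
      refine ⟨τ', ⟨hτ'1, by linarith⟩, hτ'sing, fun v hv => ?_⟩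
      have hm := mono_q S hs hmono v
      calc v ⬝ᵥ (S τ' *ᵥ v) ≤ v ⬝ᵥ (S s *ᵥ v) := hm (by linarith)
        _ < v ⬝ᵥ (S ((t₀ + τ)/2) *ᵥ v) := hstrict v hv
        _ ≤ v ⬝ᵥ (S τ *ᵥ v) := hm (by linarith)
    let τseq : ℕ → {x : ℝ // t₀ < x} := fun k =>
      Nat.recAux ⟨t₀ + 1, by linarith⟩
        (fun _ p => ⟨Classical.choose (step p.1 p.2),
          (Classical.choose_spec (step p.1 p.2)).1.1⟩) k
    set τ : ℕ → ℝ := fun k => (τseq k).1 with hτdef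
    have hτpos : ∀ k, t₀ < τ k := fun k => (τseq k).2
    have hτspec : ∀ k, (t₀ < τ (k+1) ∧ τ (k+1) < τ k) ∧ (¬ IsUnit (S (τ (k+1)))) ∧
        ∀ v : Fin n → ℝ, v ≠ 0 → v ⬝ᵥ (S (τ (k+1)) *ᵥ v) < v ⬝ᵥ (S (τ k) *ᵥ v) :=
      fun k => Classical.choose_spec (step (τseq k).1 (τseq k).2)
    have hker : ∀ k : ℕ, ∃ y : Fin n → ℝ, y ≠ 0 ∧ S (τ (k+1)) *ᵥ y = 0 := by
      intro k
      have hdet : (S (τ (k+1))).det = 0 := by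
        by_contra hd
        exact (hτspec k).2.1 ((Matrix.isUnit_iff_isUnit_det _).2 (isUnit_iff_ne_zero.2 hd))
      obtain ⟨v, hv0, hv⟩ := (Matrix.exists_mulVec_eq_zero_iff).2 hdet
      exact ⟨v, hv0, hv⟩
    choose y hy0 hyker using hker
    obtain ⟨W, hW0, hWsucc⟩ : ∃ W : ℕ → Submodule ℝ (Fin n → ℝ), W 0 = ⊥ ∧
        ∀ k, W (k+1) = W k ⊔ Submodule.span ℝ {y k} :=
      ⟨fun k => Nat.recAux ⊥ (fun k Wk => Wk ⊔ Submodule.span ℝ {y k}) k, rfl, fun k => rfl⟩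
    have hinv : ∀ k : ℕ, (∀ v ∈ W k, v ≠ 0 → v ⬝ᵥ (S (τ (k+1)) *ᵥ v) < 0) ∧
        k ≤ Module.finrank ℝ (W k) := by
      intro k
      induction k with
      | zero =>
        refine ⟨fun v hv hv0 => ?_, Nat.zero_le _⟩
        rw [hW0] at hv
        have hv' : v ∈ (⊥ : Submodule ℝ (Fin n → ℝ)) := hv
        exact absurd ((Submodule.mem_bot ℝ).1 hv') hv0
      | succ k ih =>
        obtain ⟨ihneg, ihrk⟩ := ih
        have hynot : y k ∉ W k := by
          intro hmem
          have h6 := ihneg (y k) hmem (hy0 k)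
          rw [hyker k] at h6
          simp at h6
        constructor
        · intro v hv hv0
          rw [hWsucc] at hv
          obtain ⟨u, hu, w, hw, rfl⟩ := Submodule.mem_sup.1 hv
          obtain ⟨aa, rfl⟩ := Submodule.mem_span_singleton.1 hw
          have hy_u : (y k) ⬝ᵥ (S (τ (k+1)) *ᵥ u) = 0 := by
            rw [Matrix.dotProduct_mulVec]
            have hvm : (y k) ᵥ* (S (τ (k+1))) = 0 := by
              have hsym := hsymm (τ (k+1))
              rw [← hsym.eq, Matrix.vecMul_transpose]
              exact hyker k
            rw [hvm, zero_dotProduct]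
          have hq1 : (u + aa • y k) ⬝ᵥ (S (τ (k+1)) *ᵥ (u + aa • y k))
              = u ⬝ᵥ (S (τ (k+1)) *ᵥ u) := by
            rw [Matrix.mulVec_add, Matrix.mulVec_smul, hyker k, smul_zero, add_zero,
              add_dotProduct, smul_dotProduct, hy_u, smul_zero, add_zero]
          have hle : u ⬝ᵥ (S (τ (k+1)) *ᵥ u) ≤ 0 := by
            by_cases hu0 : u = 0
            · simp [hu0]
            · exact (ihneg u hu hu0).le
          have hlt := (hτspec (k+1)).2.2 (u + aa • y k) hv0
          rw [hq1] at hlt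
          linarith
        · have hlt : W k < W (k+1) := by
            rw [hWsucc]
            refine lt_of_le_of_ne le_sup_left ?_
            intro heq
            apply hynot
            rw [heq]
            exact Submodule.mem_sup_right (Submodule.mem_span_singleton_self _)
          have := Submodule.finrank_lt_finrank_of_lt hlt
          omega
    have h1 := (hinv (n+1)).2
    have h2 : Module.finrank ℝ (W (n+1)) ≤ n := by
      have h7 := Submodule.finrank_le (W (n+1))
      rwa [Module.finrank_fin_fun] at h7
    omega

lemma matDeriv_reflect (S : ℝ → Matrix (Fin n) (Fin n) ℝ) (t₀ : ℝ) (i : ℕ) (t : ℝ) :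
    matDeriv (fun u => -S (2*t₀ - u)) i t = ((-1:ℝ)^(i+1)) • matDeriv S i (2*t₀ - t) := by
  ext a b
  set g : ℝ → ℝ := fun x => S (2*t₀ + x) a b with hg
  have h1 : iteratedDeriv i (fun s => (-S (2*t₀ - s)) a b) t
      = iteratedDeriv i (fun s => -(g (-s))) t := by
    have hfe : (fun s => (-S (2*t₀ - s)) a b) = (fun s => -(g (-s))) := by
      funext s
      simp [hg, sub_eq_add_neg]
    rw [hfe]
  have e1 : iteratedDeriv i (fun s => -(g (-s))) t
      = -(iteratedDeriv i (fun s => g (-s)) t) := iteratedDeriv_neg i (fun s => g (-s)) t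
  have e2 : iteratedDeriv i (fun s => g (-s)) t = (-1:ℝ)^i • iteratedDeriv i g (-t) :=
    iteratedDeriv_comp_neg i g t
  have e3 : iteratedDeriv i g (-t) = iteratedDeriv i (fun u => S u a b) (2*t₀ + -t) :=
    congrFun (iteratedDeriv_comp_const_add i (fun u => S u a b) (2*t₀)) (-t)
  show iteratedDeriv i (fun s => (-S (2*t₀ - s)) a b) t = _
  rw [h1, e1, e2, e3, Matrix.smul_apply, matDeriv_apply]
  simp only [smul_eq_mul, pow_succ, sub_eq_add_neg]
  ring

end MACurve

theorem monotone_ample_curve_invertible_near {n : ℕ} (hn : 1 ≤ n)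
    (S : ℝ → Matrix (Fin n) (Fin n) ℝ)
    (hsmooth : ∀ a b : Fin n, ContDiff ℝ (⊤ : ℕ∞) (fun t => S t a b))
    (hsymm : ∀ t : ℝ, (S t).IsSymm)
    (t₀ : ℝ)
    (hmono : ∀ t : ℝ, (matDeriv S 1 t).PosSemidef)
    (hample : ∃ N : ℕ, 1 ≤ N ∧ ∀ z : Fin n → ℝ, z ≠ 0 →
      ∃ i : ℕ, 1 ≤ i ∧ i ≤ N ∧ (matDeriv S i t₀).mulVec z ≠ 0) :
    ∃ ε > 0, ∀ t : ℝ, 0 < |t - t₀| → |t - t₀| < ε → IsUnit (S t) := by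
  by_contra hcon
  push_neg at hcon
  have hside : (∀ ε : ℝ, 0 < ε → ∃ t, t₀ < t ∧ t < t₀ + ε ∧ ¬ IsUnit (S t)) ∨
      (∀ ε : ℝ, 0 < ε → ∃ t, t₀ - ε < t ∧ t < t₀ ∧ ¬ IsUnit (S t)) := by
    by_contra hboth
    push_neg at hboth
    obtain ⟨h1, h2⟩ := hboth
    obtain ⟨ε₁, hε₁, hR⟩ := h1
    obtain ⟨ε₂, hε₂, hL⟩ := h2
    obtain ⟨t, ht1, ht2, ht3⟩ := hcon (min ε₁ ε₂) (lt_min hε₁ hε₂)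
    have htne : t ≠ t₀ := by
      intro h
      rw [h] at ht1
      simp at ht1
    rcases lt_or_gt_of_ne htne with hlt | hgt
    · have habs : |t - t₀| = t₀ - t := by
        rw [abs_of_neg (by linarith)]; ring
      rw [habs] at ht2
      have := lt_of_lt_of_le ht2 (min_le_right ε₁ ε₂)
      exact ht3 (hL t (by linarith) hlt)
    · have habs : |t - t₀| = t - t₀ := abs_of_pos (by linarith)
      rw [habs] at ht2
      have := lt_of_lt_of_le ht2 (min_le_left ε₁ ε₂)
      exact ht3 (hR t hgt (by linarith))
  rcases hside with hR | hL
  · exact MACurve.core S (fun a b => (hsmooth a b).of_le (by simp)) hsymm t₀ hmono hample hR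
  · apply MACurve.core (fun u => -S (2*t₀ - u)) ?_ ?_ t₀ ?_ ?_ ?_
    · intro a b
      have heq : (fun t => (-S (2*t₀ - t)) a b) = fun t => -(S (2*t₀ - t) a b) := rfl
      rw [heq]
      exact ((((hsmooth a b).of_le (by simp)).comp ((contDiff_const (c := 2*t₀)).sub contDiff_id))).neg
    · intro t
      show (-S (2*t₀ - t))ᵀ = -S (2*t₀ - t)
      rw [Matrix.transpose_neg, (hsymm _).eq]
    · intro t
      rw [MACurve.matDeriv_reflect]
      norm_num
      exact hmono _
    · obtain ⟨N, hN1, hN⟩ := hample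
      refine ⟨N, hN1, fun z hz => ?_⟩
      obtain ⟨i, hi1, hiN, hne⟩ := hN z hz
      refine ⟨i, hi1, hiN, ?_⟩
      rw [MACurve.matDeriv_reflect]
      have h2t : 2*t₀ - t₀ = t₀ := by ring
      rw [h2t, Matrix.smul_mulVec]
      exact smul_ne_zero (pow_ne_zero _ (by norm_num)) hne
    · intro ε hε
      obtain ⟨t, h1, h2, h3⟩ := hL ε hε
      refine ⟨2*t₀ - t, by linarith, by linarith, ?_⟩
      intro hUnit
      apply h3
      have heq : S t = -(-S (2*t₀ - (2*t₀ - t))) := by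
        rw [neg_neg]
        norm_num
      rw [heq]
      exact hUnit.neg
end

section
/- Let S : ℝ → M_n(ℝ) be a smooth (infinitely differentiable) family of symmetric n×n real matrices, fix t₀ ∈ ℝ, and assume: (monotone) S'(t) is positive semidefinite for every t ∈ ℝ; (ample at t₀) there exists an integer N ≥ 1 such that for every z ∈ ℝⁿ, z ≠ 0, there is some i with 1 ≤ i ≤ N and S^{(i)}(t₀)·z ≠ 0. Then there exists ε > 0 such that S(t) − S(t₀) is positive definite for every t ∈ (t₀, t₀ + ε), and S(t₀) − S(t) is positive definite for every t ∈ (t₀ − ε, t₀). -/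
open Matrix Set Filter Topology

lemma itd_of_zero (i : ℕ) : iteratedDeriv i (fun _ : ℝ => (0:ℝ)) = fun _ => 0 := by
  induction i with
  | zero => simp
  | succ i ih => rw [iteratedDeriv_succ, ih]; simp

lemma itd_zero_of_vanish {f : ℝ → ℝ} (hf : ContDiff ℝ ((⊤ : ℕ∞) : WithTop ℕ∞) f) {c d x : ℝ} (hcd : c < d)
    (hx : x ∈ Set.Icc c d) (h0 : ∀ s ∈ Set.Ioo c d, f s = 0) (i : ℕ) :
    iteratedDeriv i f x = 0 := by
  have h1 : Set.EqOn f (fun _ : ℝ => (0:ℝ)) (Set.Ioo c d) := fun s hs => h0 s hs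
  have h2 : Set.EqOn (iteratedDeriv i f) (iteratedDeriv i (fun _ : ℝ => (0:ℝ))) (Set.Ioo c d) :=
    h1.iteratedDeriv_of_isOpen isOpen_Ioo i
  have hc : Continuous (iteratedDeriv i f) :=
    (contDiff_iff_iteratedDeriv.mp hf).1 i le_top
  have hc0 : Continuous (iteratedDeriv i (fun _ : ℝ => (0:ℝ))) := by
    rw [itd_of_zero]; exact continuous_const
  have h3 : Set.EqOn (iteratedDeriv i f) (iteratedDeriv i (fun _ : ℝ => (0:ℝ)))
      (closure (Set.Ioo c d)) := h2.closure hc hc0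
  have hx' : x ∈ closure (Set.Ioo c d) := by
    rwa [closure_Ioo hcd.ne]
  have := h3 hx'
  rwa [itd_of_zero] at this

lemma itd_sum_mul {ι : Type*} [Fintype ι] (i : ℕ) :
    ∀ (f : ι → ℝ → ℝ), (∀ b, ContDiff ℝ ((⊤ : ℕ∞) : WithTop ℕ∞) (f b)) → ∀ (c : ι → ℝ) (t : ℝ),
    iteratedDeriv i (fun s => ∑ b, f b s * c b) t = ∑ b, iteratedDeriv i (f b) t * c b := by
  induction i with
  | zero => intro f hf c t; simp
  | succ i ih =>
    intro f hf c t
    have hder : (deriv (fun s => ∑ b, f b s * c b)) = fun s => ∑ b, deriv (f b) s * c b := by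
      funext s
      rw [deriv_fun_sum (fun b _ => (((hf b).differentiable (by simp)) s).mul_const (c b))]
      congr 1; funext b
      rw [deriv_mul_const ((hf b).differentiable (by simp) s)]
    rw [iteratedDeriv_succ', hder,
      ih (fun b => deriv (f b)) (fun b => (contDiff_infty_iff_deriv.mp (hf b)).2) c t]
    congr 1; funext b; rw [iteratedDeriv_succ']

theorem monotone_ample_curve_strictly_increasing_near {n : ℕ} (hn : 1 ≤ n)
    (S : ℝ → Matrix (Fin n) (Fin n) ℝ)
    (hsmooth : ∀ a b : Fin n, ContDiff ℝ (⊤ : ℕ∞) (fun t => S t a b))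
    (hsymm : ∀ t : ℝ, (S t).IsSymm)
    (t₀ : ℝ)
    (hmono : ∀ t : ℝ, (matDeriv S 1 t).PosSemidef)
    (hample : ∃ N : ℕ, 1 ≤ N ∧ ∀ z : Fin n → ℝ, z ≠ 0 →
      ∃ i : ℕ, 1 ≤ i ∧ i ≤ N ∧ (matDeriv S i t₀).mulVec z ≠ 0) :
    ∃ ε > 0,
      (∀ t ∈ Set.Ioo t₀ (t₀ + ε), (S t - S t₀).PosDef) ∧
      (∀ t ∈ Set.Ioo (t₀ - ε) t₀, (S t₀ - S t).PosDef) := by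
  classical
  have hsm : ∀ a b : Fin n, ContDiff ℝ ((⊤ : ℕ∞) : WithTop ℕ∞) (fun t => S t a b) :=
    fun a b => (hsmooth a b).of_le (by simp)
  set q : (Fin n → ℝ) → ℝ → ℝ := fun z s => z ⬝ᵥ (S s) *ᵥ z with hqdef
  -- derivative of q
  have hd : ∀ (z : Fin n → ℝ) (s : ℝ), HasDerivAt (q z) (z ⬝ᵥ (matDeriv S 1 s) *ᵥ z) s := by
    intro z s
    have h1 : ∀ a b : Fin n, HasDerivAt (fun u => S u a b) (deriv (fun u => S u a b) s) s :=
      fun a b => (((hsm a b).differentiable (by simp)) s).hasDerivAt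
    have h2 : HasDerivAt (fun u => ∑ a, z a * ∑ b, S u a b * z b)
        (∑ a, z a * ∑ b, deriv (fun u => S u a b) s * z b) s := by
      apply HasDerivAt.fun_sum
      intro a _
      exact (HasDerivAt.fun_sum (fun b _ => (h1 a b).mul_const (z b))).const_mul (z a)
    have e1 : (fun u => ∑ a, z a * ∑ b, S u a b * z b) = q z := by
      funext u; simp [hqdef, dotProduct, mulVec]
    have e2 : (∑ a, z a * ∑ b, deriv (fun u => S u a b) s * z b)
        = z ⬝ᵥ (matDeriv S 1 s) *ᵥ z := by
      simp [dotProduct, mulVec, matDeriv, iteratedDeriv_one]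
    rw [← e1, ← e2]
    exact h2
  -- monotonicity
  have hpos : ∀ (z : Fin n → ℝ) (s : ℝ), 0 ≤ z ⬝ᵥ (matDeriv S 1 s) *ᵥ z := by
    intro z s
    have := (hmono s).dotProduct_mulVec_nonneg z
    simpa using this
  have hmonoq : ∀ z : Fin n → ℝ, Monotone (q z) := by
    intro z
    apply monotone_of_deriv_nonneg (fun s => (hd z s).differentiableAt)
    intro s
    rw [(hd z s).deriv]
    exact hpos z s
  -- key strict inequality across t₀
  have hkey : ∀ t₁ t₂ : ℝ, t₁ < t₂ → t₀ ∈ Set.Icc t₁ t₂ →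
      ∀ z : Fin n → ℝ, z ≠ 0 → q z t₁ < q z t₂ := by
    intro t₁ t₂ h12 ht₀ z hz
    by_contra hcon
    push_neg at hcon
    have heq : q z t₂ = q z t₁ := le_antisymm hcon (hmonoq z h12.le)
    have hconst : ∀ s ∈ Set.Icc t₁ t₂, q z s = q z t₁ := fun s hs =>
      le_antisymm (heq ▸ hmonoq z hs.2) (hmonoq z hs.1)
    have hker : ∀ s ∈ Set.Ioo t₁ t₂, (matDeriv S 1 s) *ᵥ z = 0 := by
      intro s hs
      have hev : q z =ᶠ[𝓝 s] fun _ => q z t₁ := by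
        filter_upwards [isOpen_Ioo.mem_nhds hs] with u hu
        exact hconst u (Set.Ioo_subset_Icc_self hu)
      have hder0 : deriv (q z) s = 0 := by
        rw [hev.deriv_eq]; exact deriv_const s _
      have h0 : z ⬝ᵥ (matDeriv S 1 s) *ᵥ z = 0 := by
        rw [← (hd z s).deriv]; exact hder0
      have := ((hmono s).dotProduct_mulVec_zero_iff z).mp (by simpa using h0)
      exact this
    -- per-coordinate derivative functions
    set g : Fin n → ℝ → ℝ := fun a s => ∑ b, deriv (fun u => S u a b) s * z b with hgdef
    have hgsm : ∀ a, ContDiff ℝ ((⊤ : ℕ∞) : WithTop ℕ∞) (g a) := by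
      intro a
      apply ContDiff.sum
      intro b _
      exact ((contDiff_infty_iff_deriv.mp (hsm a b)).2).mul contDiff_const
    have hg0 : ∀ a, ∀ s ∈ Set.Ioo t₁ t₂, g a s = 0 := by
      intro a s hs
      have := congrFun (hker s hs) a
      simpa [hgdef, mulVec, dotProduct, matDeriv, iteratedDeriv_one] using this
    have hitd : ∀ (a : Fin n) (j : ℕ), iteratedDeriv j (g a) t₀ = 0 :=
      fun a j => itd_zero_of_vanish (hgsm a) h12 ht₀ (hg0 a) j
    obtain ⟨N, -, hN⟩ := hample
    obtain ⟨i, hi1, -, hne⟩ := hN z hz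
    apply hne
    obtain ⟨j, rfl⟩ : ∃ j, i = j + 1 := ⟨i - 1, (Nat.succ_pred_eq_of_pos hi1).symm⟩
    funext a
    have e3 : (matDeriv S (j+1) t₀ *ᵥ z) a
        = ∑ b, iteratedDeriv (j+1) (fun u => S u a b) t₀ * z b := by
      simp [matDeriv, mulVec, dotProduct]
    rw [e3]
    have e4 : ∀ b : Fin n, iteratedDeriv (j+1) (fun u => S u a b) t₀
        = iteratedDeriv j (deriv (fun u => S u a b)) t₀ := fun b => by
      rw [iteratedDeriv_succ']
    simp_rw [e4]
    rw [← itd_sum_mul j (fun b => deriv (fun u => S u a b))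
      (fun b => (contDiff_infty_iff_deriv.mp (hsm a b)).2) z t₀]
    exact hitd a j
  -- hermitian parts
  have hherm : ∀ t₁ t₂ : ℝ, (S t₁ - S t₂).IsHermitian := by
    intro t₁ t₂
    rw [Matrix.IsHermitian]
    ext a b
    have h1 := congrFun (congrFun (hsymm t₁) a) b
    have h2 := congrFun (congrFun (hsymm t₂) a) b
    simp only [Matrix.transpose_apply] at h1 h2
    simp [Matrix.conjTranspose_apply, Matrix.sub_apply, h1, h2]
  have hstar : ∀ x : Fin n → ℝ, star x = x := fun x => by funext a; simp
  refine ⟨1, one_pos, ?_, ?_⟩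
  · intro t ht
    refine Matrix.PosDef.of_dotProduct_mulVec_pos (hherm t t₀) (fun x hx => ?_)
    have := hkey t₀ t ht.1 ⟨le_refl _, ht.1.le⟩ x hx
    rw [hstar x, Matrix.sub_mulVec, dotProduct_sub]
    exact sub_pos.mpr this
  · intro t ht
    refine Matrix.PosDef.of_dotProduct_mulVec_pos (hherm t₀ t) (fun x hx => ?_)
    have := hkey t t₀ ht.2 ⟨ht.2.le, le_refl _⟩ x hx
    rw [hstar x, Matrix.sub_mulVec, dotProduct_sub]
    exact sub_pos.mpr this
end

section
/- Let I ⊆ ℝ be an open interval and S : I → M_n(ℝ) a smooth family of symmetric n×n real matrices such that S'(t) is positive semidefinite for every t ∈ I, and such that the curve is ample at every t ∈ I, i.e. for each t ∈ I there exists an integer N ≥ 1 such that for every z ∈ ℝⁿ, z ≠ 0, there is some i with 1 ≤ i ≤ N and S^{(i)}(t)·z ≠ 0. Then for all t₁, t₂ ∈ I with t₁ < t₂ the matrix S(t₂) − S(t₁) is positive definite; in particular S(t₁) ≠ S(t₂) and S(t₂) − S(t₁) is invertible (the corresponding curve of Lagrangian subspaces has no self-intersections). -/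
open Matrix

private lemma iterDeriv_hasDerivAt {f : ℝ → ℝ} {I : Set ℝ} (hI : IsOpen I)
    (hf : ContDiffOn ℝ (⊤ : ℕ∞) f I) (m : ℕ) {t : ℝ} (ht : t ∈ I) :
    HasDerivAt (iteratedDeriv m f) (iteratedDeriv (m + 1) f t) t := by
  have hEq : iteratedDerivWithin m f I =ᶠ[nhds t] iteratedDeriv m f := by
    filter_upwards [hI.mem_nhds ht] with x hx
    simp only [iteratedDerivWithin, iteratedDeriv, iteratedFDerivWithin_of_isOpen m hI hx]
  have h1 : DifferentiableWithinAt ℝ (iteratedDerivWithin m f I) I t :=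
    hf.differentiableOn_iteratedDerivWithin (by exact_mod_cast ENat.coe_lt_top m) hI.uniqueDiffOn t ht
  have h2 : DifferentiableAt ℝ (iteratedDeriv m f) t :=
    (h1.differentiableAt (hI.mem_nhds ht)).congr_of_eventuallyEq hEq.symm
  rw [iteratedDeriv_succ]
  exact h2.hasDerivAt

private lemma key_pos {n : ℕ} {I : Set ℝ} (hopen : IsOpen I) (hconn : I.OrdConnected)
    {S : ℝ → Matrix (Fin n) (Fin n) ℝ}
    (hsmooth : ∀ a b : Fin n, ContDiffOn ℝ (⊤ : ℕ∞) (fun t => S t a b) I)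
    (hmono : ∀ t ∈ I, (matDeriv S 1 t).PosSemidef)
    (hample : ∀ t ∈ I, ∃ N : ℕ, 1 ≤ N ∧ ∀ z : Fin n → ℝ, z ≠ 0 →
      ∃ i : ℕ, 1 ≤ i ∧ i ≤ N ∧ (matDeriv S i t).mulVec z ≠ 0)
    {t₁ t₂ : ℝ} (ht₁ : t₁ ∈ I) (ht₂ : t₂ ∈ I) (hlt : t₁ < t₂)
    {z : Fin n → ℝ} (hz : z ≠ 0) :
    0 < z ⬝ᵥ (S t₂ - S t₁) *ᵥ z := by
  have hIcc : Set.Icc t₁ t₂ ⊆ I := hconn.out ht₁ ht₂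
  have hEnt : ∀ (i : ℕ) (a b : Fin n), ∀ t ∈ I,
      HasDerivAt (fun u => matDeriv S i u a b) (matDeriv S (i + 1) t a b) t := by
    intro i a b t ht
    have := iterDeriv_hasDerivAt hopen (hsmooth a b) i ht
    simpa [matDeriv] using this
  set f : ℝ → ℝ := fun u => z ⬝ᵥ (S u) *ᵥ z with hfdef
  have h0 : ∀ u, matDeriv S 0 u = S u := by
    intro u; ext a b; simp [matDeriv]
  have hfder : ∀ t ∈ I, HasDerivAt f (z ⬝ᵥ matDeriv S 1 t *ᵥ z) t := by
    intro t ht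
    have h1 : HasDerivAt (fun u => ∑ a, ∑ b, z a * (S u a b * z b))
        (∑ a, ∑ b, z a * (matDeriv S 1 t a b * z b)) t := by
      apply HasDerivAt.fun_sum; intro a _
      apply HasDerivAt.fun_sum; intro b _
      have h := hEnt 0 a b t ht
      rw [show (fun u => matDeriv S 0 u a b) = fun u => S u a b from
        funext fun u => by rw [h0]] at h
      exact (h.mul_const (z b)).const_mul (z a)
    have h2 : (fun u => ∑ a, ∑ b, z a * (S u a b * z b)) = f := by
      funext u; simp [hfdef, dotProduct, mulVec, Finset.mul_sum]
    have h3 : (∑ a, ∑ b, z a * (matDeriv S 1 t a b * z b)) = z ⬝ᵥ matDeriv S 1 t *ᵥ z := by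
      simp [dotProduct, mulVec, Finset.mul_sum]
    rw [← h2, ← h3]
    exact h1
  have hmonof : MonotoneOn f (Set.Icc t₁ t₂) := by
    apply monotoneOn_of_deriv_nonneg (convex_Icc _ _)
    · exact fun x hx => (hfder x (hIcc hx)).continuousAt.continuousWithinAt
    · intro x hx
      rw [interior_Icc] at hx
      exact (hfder x (hIcc (Set.Ioo_subset_Icc_self hx))).differentiableAt.differentiableWithinAt
    · intro x hx
      rw [interior_Icc] at hx
      rw [(hfder x (hIcc (Set.Ioo_subset_Icc_self hx))).deriv]
      simpa using (hmono x (hIcc (Set.Ioo_subset_Icc_self hx))).dotProduct_mulVec_nonneg z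
  have hle : f t₁ ≤ f t₂ :=
    hmonof (Set.left_mem_Icc.mpr hlt.le) (Set.right_mem_Icc.mpr hlt.le) hlt.le
  rcases lt_or_eq_of_le hle with hstrict | heq
  · have : z ⬝ᵥ (S t₂ - S t₁) *ᵥ z = f t₂ - f t₁ := by
      simp [hfdef, sub_mulVec, dotProduct_sub]
    rw [this]; linarith
  · exfalso
    have hconst : ∀ u ∈ Set.Ioo t₁ t₂, f u = f t₁ := by
      intro u hu
      have huI : u ∈ Set.Icc t₁ t₂ := Set.Ioo_subset_Icc_self hu
      have h1 := hmonof (Set.left_mem_Icc.mpr hlt.le) huI hu.1.le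
      have h2 := hmonof huI (Set.right_mem_Icc.mpr hlt.le) hu.2.le
      linarith
    have hker : ∀ i : ℕ, 1 ≤ i → ∀ s ∈ Set.Ioo t₁ t₂, matDeriv S i s *ᵥ z = 0 := by
      intro i
      induction i with
      | zero => omega
      | succ i ih =>
        intro _ s hs
        have hsI : s ∈ I := hIcc (Set.Ioo_subset_Icc_self hs)
        by_cases hi : 1 ≤ i
        · -- inductive step: derivative of eventually-zero function
          funext a
          have hD : HasDerivAt (fun u => ∑ b, matDeriv S i u a b * z b)
              (∑ b, matDeriv S (i + 1) s a b * z b) s :=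
            HasDerivAt.fun_sum fun b _ => (hEnt i a b s hsI).mul_const (z b)
          have hZ : HasDerivAt (fun u => ∑ b, matDeriv S i u a b * z b) 0 s := by
            refine (hasDerivAt_const s 0).congr_of_eventuallyEq ?_
            filter_upwards [Ioo_mem_nhds hs.1 hs.2] with u hu
            have := congrFun (ih hi u hu) a
            simpa [mulVec, dotProduct] using this
          have hzero : ∑ b, matDeriv S (i + 1) s a b * z b = 0 := hD.unique hZ
          simpa [mulVec, dotProduct] using hzero
        · -- base case i = 0
          have hi0 : i = 0 := by omega
          subst hi0
          have hds : HasDerivAt f (z ⬝ᵥ matDeriv S 1 s *ᵥ z) s := hfder s hsI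
          have hzeroD : HasDerivAt f 0 s := by
            refine (hasDerivAt_const s (f t₁)).congr_of_eventuallyEq ?_
            filter_upwards [Ioo_mem_nhds hs.1 hs.2] with u hu
            exact hconst u hu
          have h0' : z ⬝ᵥ matDeriv S 1 s *ᵥ z = 0 := hds.unique hzeroD
          exact ((hmono s hsI).dotProduct_mulVec_zero_iff z).mp (by simpa using h0')
    have htIoo : (t₁ + t₂) / 2 ∈ Set.Ioo t₁ t₂ := ⟨by linarith, by linarith⟩
    obtain ⟨N, _, hNz⟩ := hample _ (hIcc (Set.Ioo_subset_Icc_self htIoo))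
    obtain ⟨i, hi1, _, hne⟩ := hNz z hz
    exact hne (hker i hi1 _ htIoo)

theorem monotone_ample_curve_no_self_intersections {n : ℕ} (hn : 1 ≤ n)
    (I : Set ℝ) (hopen : IsOpen I) (hconn : I.OrdConnected)
    (S : ℝ → Matrix (Fin n) (Fin n) ℝ)
    (hsmooth : ∀ a b : Fin n, ContDiffOn ℝ (⊤ : ℕ∞) (fun t => S t a b) I)
    (hsymm : ∀ t ∈ I, (S t).IsSymm)
    (hmono : ∀ t ∈ I, (matDeriv S 1 t).PosSemidef)
    (hample : ∀ t ∈ I, ∃ N : ℕ, 1 ≤ N ∧ ∀ z : Fin n → ℝ, z ≠ 0 →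
      ∃ i : ℕ, 1 ≤ i ∧ i ≤ N ∧ (matDeriv S i t).mulVec z ≠ 0) :
    ∀ t₁ ∈ I, ∀ t₂ ∈ I, t₁ < t₂ →
      (S t₂ - S t₁).PosDef ∧ S t₁ ≠ S t₂ ∧ IsUnit (S t₂ - S t₁) := by
  intro t₁ ht₁ t₂ ht₂ hlt
  have key : ∀ z : Fin n → ℝ, z ≠ 0 → 0 < z ⬝ᵥ (S t₂ - S t₁) *ᵥ z := fun z hz =>
    key_pos hopen hconn hsmooth hmono hample ht₁ ht₂ hlt hz
  have hpd : (S t₂ - S t₁).PosDef := by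
    constructor
    · rw [Matrix.IsHermitian, conjTranspose_eq_transpose_of_trivial]
      exact (hsymm t₂ ht₂).sub (hsymm t₁ ht₁)
    · intro x hx
      simpa [dotProduct, mulVec, Finsupp.sum_fintype, Finset.mul_sum, mul_assoc, mul_sub, sub_mul] using key x (by simpa [Finsupp.coe_eq_zero] using hx)
  refine ⟨hpd, ?_, hpd.isUnit⟩
  intro h
  haveI : Nonempty (Fin n) := ⟨⟨0, hn⟩⟩
  have hdet := hpd.det_pos
  rw [h, sub_self, Matrix.det_zero] at hdet
  exact lt_irrefl _ hdet
end

section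
/- Let z₀ = (p, 0) ∈ ℝ^{2n} with p ∈ ℝⁿ. Then for every t ∈ ℝ, (exp(t·Ω·ℍ)·z₀)ᵀ · Ω · (Ω·ℍ·exp(t·Ω·ℍ)·z₀) = −pᵀ·B·Bᵀ·p, and in particular this quantity is ≤ 0 and independent of t (the Jacobi curve t ↦ exp(t·Ω·ℍ)·𝒱 is monotone). -/
open Matrix

/-!
The quantity is `zᵀ Ω (Ω ℍ) z = -zᵀ ℍ z` with `z = exp(tΩℍ) z₀`, since `Ω² = -1`. The quadratic form
of `ℍ` is the energy of the linear Hamiltonian flow `exp(tΩℍ)` and is conserved: `ℍ (Ωℍ) = -(Ωℍ)ᵀ ℍ`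
because `ℍ` is symmetric and `Ω` skew, so `ℍ` intertwines `exp(tΩℍ)` with `exp(-t(Ωℍ)ᵀ)`. Hence the
quantity equals `-z₀ᵀ ℍ z₀ = -pᵀ B Bᵀ p = -|Bᵀ p|²`.
-/

namespace Matrix

variable {m R : Type*} [Fintype m]

theorem mulVec_dotProduct_mulVec_mulVec [CommRing R] (E X : Matrix m m R) (v : m → R) :
    (E *ᵥ v) ⬝ᵥ (X *ᵥ (E *ᵥ v)) = v ⬝ᵥ ((Eᵀ * X * E) *ᵥ v) := by
  rw [← mulVec_mulVec, ← mulVec_mulVec, dotProduct_mulVec v, vecMul_transpose]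

variable [DecidableEq m] {𝕜 : Type*} [RCLike 𝕜]

theorem transpose_exp_mul_mul_exp {S X : Matrix m m 𝕜} (h : S * X = -(Xᵀ * S)) :
    (NormedSpace.exp X)ᵀ * S * NormedSpace.exp X = S := by
  have hsemiconj : SemiconjBy S X (-Xᵀ) := by rw [SemiconjBy, h, neg_mul]
  rw [← exp_transpose, ← neg_neg Xᵀ]
  open scoped Norms.Operator in exact hsemiconj.exp_neg_mul_mul_exp_eq_self

theorem transpose_exp_smul_mul_mul_exp_smul_mul {S J : Matrix m m 𝕜} (hS : S.IsSymm)
    (hJ : Jᵀ = -J) (t : 𝕜) :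
    (NormedSpace.exp (t • (J * S)))ᵀ * S * NormedSpace.exp (t • (J * S)) = S := by
  apply transpose_exp_mul_mul_exp
  rw [transpose_smul, transpose_mul, hS.eq, hJ]
  simp only [Matrix.mul_smul, smul_mul, mul_neg, neg_mul, smul_neg, neg_neg, Matrix.mul_assoc]

end Matrix

theorem Omega_transpose (n : ℕ) : (Omega n)ᵀ = -Omega n := by
  simp [Omega, fromBlocks_transpose, fromBlocks_neg]

theorem Omega_mul_Omega (n : ℕ) : Omega n * Omega n = -1 := by
  simp [Omega, fromBlocks_multiply, ← fromBlocks_one, fromBlocks_neg]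

theorem HMat_isSymm {n k : ℕ} (A : Matrix (Fin n) (Fin n) ℝ) {Q : Matrix (Fin n) (Fin n) ℝ}
    (hQ : Q.IsSymm) (B : Matrix (Fin n) (Fin k) ℝ) : (HMat A Q B).IsSymm := by
  simp [IsSymm, HMat, fromBlocks_transpose, transpose_mul, hQ.eq]

theorem sumElim_dotProduct_HMat_mulVec_sumElim {n k : ℕ} (A Q : Matrix (Fin n) (Fin n) ℝ)
    (B : Matrix (Fin n) (Fin k) ℝ) (p : Fin n → ℝ) :
    Sum.elim p 0 ⬝ᵥ (HMat A Q B *ᵥ Sum.elim p 0) = p ⬝ᵥ ((B * Bᵀ) *ᵥ p) := by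
  simp [HMat, fromBlocks_mulVec, sumElim_dotProduct_sumElim]

theorem dotProduct_mul_transpose_mulVec_nonneg {n k : Type*} [Fintype n] [Fintype k]
    (B : Matrix n k ℝ) (p : n → ℝ) : 0 ≤ p ⬝ᵥ ((B * Bᵀ) *ᵥ p) := by
  rw [← mulVec_mulVec, dotProduct_mulVec, ← mulVec_transpose]
  exact Finset.sum_nonneg fun i _ => mul_self_nonneg _

theorem jacobi_curve_monotone_general {n k : ℕ}
    (A Q : Matrix (Fin n) (Fin n) ℝ) (hQ : Q.IsSymm) (B : Matrix (Fin n) (Fin k) ℝ)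
    (p : Fin n → ℝ) (z₀ : Fin n ⊕ Fin n → ℝ) (hz₀ : z₀ = Sum.elim p 0) :
    ∀ t : ℝ,
      ((NormedSpace.exp (t • (Omega n * HMat A Q B))).mulVec z₀) ⬝ᵥ
        ((Omega n).mulVec ((Omega n * HMat A Q B).mulVec
          ((NormedSpace.exp (t • (Omega n * HMat A Q B))).mulVec z₀)))
        = -(p ⬝ᵥ ((B * Bᵀ).mulVec p)) ∧
      ((NormedSpace.exp (t • (Omega n * HMat A Q B))).mulVec z₀) ⬝ᵥ
        ((Omega n).mulVec ((Omega n * HMat A Q B).mulVec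
          ((NormedSpace.exp (t • (Omega n * HMat A Q B))).mulVec z₀))) ≤ 0 := by
  intro t
  have hΩΩH : Omega n * (Omega n * HMat A Q B) = -HMat A Q B := by
    rw [← Matrix.mul_assoc, Omega_mul_Omega, neg_one_mul]
  have hvalue : (NormedSpace.exp (t • (Omega n * HMat A Q B)) *ᵥ z₀) ⬝ᵥ
      (Omega n *ᵥ ((Omega n * HMat A Q B) *ᵥ (NormedSpace.exp (t • (Omega n * HMat A Q B)) *ᵥ z₀)))
        = -(p ⬝ᵥ ((B * Bᵀ) *ᵥ p)) := by
    rw [mulVec_mulVec, hΩΩH, neg_mulVec, dotProduct_neg, mulVec_dotProduct_mulVec_mulVec,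
      transpose_exp_smul_mul_mul_exp_smul_mul (HMat_isSymm A hQ B) (Omega_transpose n), hz₀,
      sumElim_dotProduct_HMat_mulVec_sumElim]
  exact ⟨hvalue, hvalue ▸ neg_nonpos_of_nonneg (dotProduct_mul_transpose_mulVec_nonneg B p)⟩

theorem jacobi_curve_monotone {n k : ℕ} (hn : 1 ≤ n) (hk : 1 ≤ k)
    (A Q : Matrix (Fin n) (Fin n) ℝ) (hQ : Q.IsSymm) (B : Matrix (Fin n) (Fin k) ℝ)
    (p : Fin n → ℝ) (z₀ : Fin n ⊕ Fin n → ℝ) (hz₀ : z₀ = Sum.elim p 0) :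
    ∀ t : ℝ,
      ((NormedSpace.exp (t • (Omega n * HMat A Q B))).mulVec z₀) ⬝ᵥ
        ((Omega n).mulVec ((Omega n * HMat A Q B).mulVec
          ((NormedSpace.exp (t • (Omega n * HMat A Q B))).mulVec z₀)))
        = -(p ⬝ᵥ ((B * Bᵀ).mulVec p)) ∧
      ((NormedSpace.exp (t • (Omega n * HMat A Q B))).mulVec z₀) ⬝ᵥ
        ((Omega n).mulVec ((Omega n * HMat A Q B).mulVec
          ((NormedSpace.exp (t • (Omega n * HMat A Q B))).mulVec z₀))) ≤ 0 :=
  jacobi_curve_monotone_general A Q hQ B p z₀ hz₀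
end
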